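/- arXiv:1612.00471 — 9 statements merged into one kernel-verified Lean document; each statement's English description precedes it below -/
import Mathlib

section
/- Let r, s, n be positive integers with s ≤ r. Given a Gallai r-coloring of the edges of K_n using color set [r] = {1, ..., r}, the product of the chromatic numbers χ(G_S), taken over all subsets S ⊆ [r] with |S| = s, is at least n^{binom(r-1, s-1)}. -/
/-
Gallai's theorem gives, for a Gallai colouring of at least two vertices, a partition into at
least two modules (every outside vertex sees a part in a single colour) such that only two colours
`a`, `b` occur between parts. We prove it by induction on the vertex set. If `W - x` has such a
partition, then either some part receives only the colours `a`, `b` from `x`, and it is split off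
by a cut whose crossing edges have colours `a`, `b`; or all edges at `x` of other colours share one
colour `e`, and `x` (together with one part) is split off by a cut with two crossing colours. Given
a cut with crossing colours `a`, `b`, the connected components of the graph of the edges of other
colours are modules, hence form the partition.

The bound then follows by induction on `n`, splitting the vertices into the parts `V i` of a Gallai
partition. If `a, b ∈ S`, colourings of `G_S[V i]` need disjoint colour sets, so
`∑ i, χ(G_S[V i]) ≤ χ(G_S)`. If `a ∈ S`, `b ∉ S`, and `S'` is the image of `S` under the
transposition of `a` and `b`, two distinct parts are completely joined in `G_S` or in `G_S'`, so
`∑ i, χ(G_S[V i]) χ(G_S'[V i]) ≤ χ(G_S) χ(G_S')`. Every other `S` satisfies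
`χ(G_S[V i]) ≤ χ(G_S)`. Weighted AM-GM with the weights `|V i| / n` combines these with the
inductive bounds, using that `binom(r-1, s-1)` sets contain `a`.
-/
open Finset

namespace Gallai

variable {V α : Type*}

structure IsGallai (c : V → V → α) : Prop where
  symm : ∀ u v, c u v = c v u
  no_rainbow : ∀ ⦃u v w⦄, u ≠ v → v ≠ w → u ≠ w →
    c u v = c v w ∨ c v w = c u w ∨ c u v = c u w

namespace IsGallai

variable {c : V → V → α}

theorem comp (hc : IsGallai c) {W : Type*} {f : W → V} (hf : Function.Injective f) :
    IsGallai fun u v => c (f u) (f v) where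
  symm u v := hc.symm (f u) (f v)
  no_rainbow _ _ _ huv hvw huw := hc.no_rainbow (hf.ne huv) (hf.ne hvw) (hf.ne huw)

theorem color_eq_of_pred (hc : IsGallai c) (p : α → Prop) {u v w : V} (huv : u ≠ v)
    (hvw : v ≠ w) (huw : u ≠ w) (hv : p (c u v)) (hw : p (c u w)) (hvw' : ¬ p (c v w)) :
    c u v = c u w := by
  rcases hc.no_rainbow huv hvw huw with h | h | h
  · exact absurd (h ▸ hv) hvw'
  · exact absurd (h ▸ hw) hvw'
  · exact h

end IsGallai

/-- The parts are the fibres of `part`; `color_eq` says that each part is a module. -/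
structure IsGallaiPartition (c : V → V → α) (W : Finset V) {ι : Type*} (part : V → ι)
    (a b : α) : Prop where
  exists_ne : ∃ u ∈ W, ∃ v ∈ W, part u ≠ part v
  color_eq : ∀ u ∈ W, ∀ v ∈ W, ∀ v' ∈ W, part u ≠ part v → part v = part v' → c u v = c u v'
  cross : ∀ u ∈ W, ∀ v ∈ W, part u ≠ part v → c u v = a ∨ c u v = b

structure IsTwoColorCut [DecidableEq V] (c : V → V → α) (W U : Finset V) (a b : α) : Prop where
  subset : U ⊆ W
  nonempty : U.Nonempty
  sdiff_nonempty : (W \ U).Nonempty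
  cross : ∀ u ∈ U, ∀ v ∈ W \ U, c u v = a ∨ c u v = b

def avoidingGraph (c : V → V → α) (W : Finset V) (a b : α) : SimpleGraph V :=
  SimpleGraph.fromRel fun u v => u ∈ W ∧ v ∈ W ∧ c u v ≠ a ∧ c u v ≠ b

variable {c : V → V → α} {W : Finset V} {a b : α}

theorem color_eq_or_of_not_adj_avoidingGraph {u v : V} (huv : u ≠ v) (hu : u ∈ W)
    (hv : v ∈ W) (h : ¬ (avoidingGraph c W a b).Adj u v) : c u v = a ∨ c u v = b := by
  by_contra! hne
  exact h ⟨huv, Or.inl ⟨hu, hv, hne⟩⟩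

theorem IsGallai.mem_of_adj_avoidingGraph (hc : IsGallai c) {u v : V}
    (h : (avoidingGraph c W a b).Adj u v) : u ∈ W ∧ v ∈ W ∧ c u v ≠ a ∧ c u v ≠ b := by
  obtain ⟨-, h | ⟨hv, hu, h⟩⟩ := h
  · exact h
  · exact ⟨hu, hv, hc.symm u v ▸ h⟩

/-- Along an edge `q r` of the component of `v`, the colours from `u` lie in `{a, b}` and that of
`q r` does not, so `c u q = c u r`. -/
theorem IsGallai.color_eq_of_reachable (hc : IsGallai c) {u v v' : V} (hu : u ∈ W)
    (huv : ¬ (avoidingGraph c W a b).Reachable u v)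
    (hvv' : (avoidingGraph c W a b).Reachable v v') : c u v = c u v' := by
  rw [SimpleGraph.reachable_iff_reflTransGen] at hvv'
  induction hvv' with
  | refl => rfl
  | @tail q r hvq hqr ih =>
    have hvq : (avoidingGraph c W a b).Reachable v q :=
      (SimpleGraph.reachable_iff_reflTransGen _ _).2 hvq
    have huq : ¬ (avoidingGraph c W a b).Reachable u q := fun h => huv (h.trans hvq.symm)
    have hur : ¬ (avoidingGraph c W a b).Reachable u r := fun h =>
      huq (h.trans hqr.reachable.symm)
    obtain ⟨hq, hr, hqra, hqrb⟩ := hc.mem_of_adj_avoidingGraph hqr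
    rw [ih]
    refine hc.color_eq_of_pred (fun γ => γ = a ∨ γ = b) (fun h => huq (h ▸ .rfl))
      hqr.ne (fun h => hur (h ▸ .rfl)) ?_ ?_ (by tauto)
    · exact color_eq_or_of_not_adj_avoidingGraph (fun h => huq (h ▸ .rfl)) hu hq
        (fun h => huq h.reachable)
    · exact color_eq_or_of_not_adj_avoidingGraph (fun h => hur (h ▸ .rfl)) hu hr
        (fun h => hur h.reachable)

namespace IsGallaiPartition

variable {ι : Type*} {part : V → ι} {x : V}

theorem exists_part_ne (hP : IsGallaiPartition c W part a b) (y : V) :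
    ∃ q ∈ W, part q ≠ part y := by
  obtain ⟨u, hu, v, hv, huv⟩ := hP.exists_ne
  by_cases h : part u = part y
  · exact ⟨v, hv, fun h' => huv (h.trans h'.symm)⟩
  · exact ⟨u, hu, h⟩

theorem color_eq_of_part_eq (hP : IsGallaiPartition c W part a b) (hc : IsGallai c)
    {u u' v v' : V} (hu : u ∈ W) (hu' : u' ∈ W) (hv : v ∈ W) (hv' : v' ∈ W)
    (huu' : part u = part u') (hvv' : part v = part v') (huv : part u ≠ part v) :
    c u v = c u' v' := by
  rw [hP.color_eq u hu v hv v' hv' huv hvv', hc.symm, hc.symm u' v',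
    hP.color_eq v' hv' u hu u' hu' (hvv' ▸ Ne.symm huv) huu']

theorem color_eq_of_ne_of_ne (hP : IsGallaiPartition c W part a b) (hc : IsGallai c)
    (hx : x ∉ W) (hex : ∀ p ∈ W, ∃ y ∈ W, part y = part p ∧ c x y ≠ a ∧ c x y ≠ b)
    {y y' : V} (hy : y ∈ W) (hy' : y' ∈ W) (hya : c x y ≠ a) (hyb : c x y ≠ b)
    (hy'a : c x y' ≠ a) (hy'b : c x y' ≠ b) : c x y = c x y' := by
  have hne : ∀ {z z'}, z ∈ W → z' ∈ W → part z ≠ part z' → c x z ≠ a → c x z ≠ b →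
      c x z' ≠ a → c x z' ≠ b → c x z = c x z' := fun hz hz' hzz' h1 h2 h3 h4 =>
    hc.color_eq_of_pred (fun γ => ¬ (γ = a ∨ γ = b)) (fun h => hx (h ▸ hz))
      (fun h => hzz' (h ▸ rfl)) (fun h => hx (h ▸ hz')) (by tauto) (by tauto)
      (not_not.2 (hP.cross _ hz _ hz' hzz'))
  by_cases hyy' : part y = part y'
  · obtain ⟨q, hq, hqy⟩ := hP.exists_part_ne y
    obtain ⟨z, hz, hzq, hza, hzb⟩ := hex q hq
    rw [hne hy hz (hzq ▸ hqy.symm) hya hyb hza hzb,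
      hne hz hy' (hzq ▸ hyy' ▸ hqy) hza hzb hy'a hy'b]
  · exact hne hy hy' hyy' hya hyb hy'a hy'b

theorem color_eq_of_eq_or_eq (hP : IsGallaiPartition c W part a b) (hc : IsGallai c)
    (hx : x ∉ W) (hex : ∀ p ∈ W, ∃ y ∈ W, part y = part p ∧ c x y ≠ a ∧ c x y ≠ b)
    {p q : V} (hp : p ∈ W) (hq : q ∈ W) (hpq : part p ≠ part q)
    (hxp : c x p = a ∨ c x p = b) : c x p = c p q := by
  obtain ⟨y, hy, hyq, hya, hyb⟩ := hex q hq
  rw [hc.symm, hP.color_eq p hp q hq y hy hpq hyq.symm]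
  refine hc.color_eq_of_pred (fun γ => γ = a ∨ γ = b) (fun h => hx (h ▸ hp))
    (fun h => hx (h ▸ hy)) (fun h => hpq (h ▸ hyq)) (hc.symm p x ▸ hxp)
    (hP.cross p hp y hy (hyq ▸ hpq)) (by tauto)

end IsGallaiPartition

section Cut

variable [DecidableEq V] {U : Finset V}

theorem IsTwoColorCut.not_reachable (hc : IsGallai c) (hU : IsTwoColorCut c W U a b) {u v : V}
    (hu : u ∈ U) (hv : v ∈ W \ U) : ¬ (avoidingGraph c W a b).Reachable u v := by
  suffices ∀ w, Relation.ReflTransGen (avoidingGraph c W a b).Adj u w → w ∈ U from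
    fun h => (mem_sdiff.1 hv).2 (this v ((SimpleGraph.reachable_iff_reflTransGen _ _).1 h))
  intro w h
  induction h with
  | refl => exact hu
  | @tail q r _ hqr hq =>
    by_contra hr
    obtain ⟨-, hrW, hqra, hqrb⟩ := hc.mem_of_adj_avoidingGraph hqr
    rcases hU.cross q hq r (mem_sdiff.2 ⟨hrW, hr⟩) with h | h
    · exact hqra h
    · exact hqrb h

theorem IsTwoColorCut.isGallaiPartition (hc : IsGallai c) (hU : IsTwoColorCut c W U a b) :
    IsGallaiPartition c W (fun v => {w | (avoidingGraph c W a b).Reachable v w}) a b := by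
  set H := avoidingGraph c W a b
  have hpart : ∀ u v, {w | H.Reachable u w} = {w | H.Reachable v w} ↔ H.Reachable u v := by
    refine fun u v => ⟨fun h => ?_, fun h => Set.ext fun w => ⟨h.symm.trans, h.trans⟩⟩
    have : v ∈ {w | H.Reachable v w} := SimpleGraph.Reachable.refl v
    rwa [← h] at this
  refine ⟨?_, fun u hu v _ v' _ huv hvv' => ?_, fun u hu v hv huv => ?_⟩
  · obtain ⟨u, hu⟩ := hU.nonempty
    obtain ⟨v, hv⟩ := hU.sdiff_nonempty
    exact ⟨u, hU.subset hu, v, (mem_sdiff.1 hv).1,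
      fun h => hU.not_reachable hc hu hv ((hpart u v).1 h)⟩
  · rw [Ne, hpart] at huv
    rw [hpart] at hvv'
    exact hc.color_eq_of_reachable hu huv hvv'
  · rw [Ne, hpart] at huv
    exact color_eq_or_of_not_adj_avoidingGraph (fun h => huv (h ▸ .rfl)) hu hv
      (fun h => huv h.reachable)

theorem isTwoColorCut_singleton_insert {x : V} (hx : x ∉ W) (hW : W.Nonempty) {e : α}
    (he : ∀ z ∈ W, c x z = e) : IsTwoColorCut c (insert x W) {x} e e := by
  refine ⟨by simp, by simp, ?_, fun u hu z hz => Or.inl ?_⟩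
  · obtain ⟨z, hz⟩ := hW
    exact ⟨z, by simp [hz, ne_of_mem_of_not_mem hz hx]⟩
  · simp only [mem_sdiff, mem_insert, mem_singleton] at hu hz
    rw [hu]
    exact he z (hz.1.resolve_left hz.2)

namespace IsGallaiPartition

variable {ι : Type*} [DecidableEq ι] {part : V → ι} {x : V}

theorem isTwoColorCut_insert_part (hP : IsGallaiPartition c W part a b) (hc : IsGallai c)
    (hx : x ∉ W) {p : V} (hp : p ∈ W)
    (hpx : ∀ y ∈ W, part y = part p → c x y = a ∨ c x y = b) :
    IsTwoColorCut c (insert x W) {y ∈ W | part y = part p} a b := by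
  refine ⟨(filter_subset _ _).trans (subset_insert x W), ⟨p, by simp [hp]⟩, ⟨x, by simp [hx]⟩,
    fun u hu v hv => ?_⟩
  simp only [mem_sdiff, mem_insert, mem_filter] at hu hv
  rcases hv with ⟨rfl | hv, hvp⟩
  · rw [hc.symm]
    exact hpx u hu.1 hu.2
  · exact hP.cross u hu.1 v hv (fun h => hvp ⟨hv, h ▸ hu.2⟩)

/-- Every edge from the part of `w` to the rest has colour `c x w`, as has every edge from `x` to
the rest with colour `a` or `b`. -/
theorem isTwoColorCut_insert_insert_part (hP : IsGallaiPartition c W part a b)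
    (hc : IsGallai c) (hx : x ∉ W)
    (hex : ∀ p ∈ W, ∃ y ∈ W, part y = part p ∧ c x y ≠ a ∧ c x y ≠ b) {y₀ w : V}
    (hy₀ : y₀ ∈ W) (hy₀a : c x y₀ ≠ a) (hy₀b : c x y₀ ≠ b) (hw : w ∈ W)
    (hxw : c x w = a ∨ c x w = b) :
    IsTwoColorCut c (insert x W) (insert x {y ∈ W | part y = part w}) (c x y₀) (c x w) := by
  have hwz : ∀ z ∈ W, part z ≠ part w → c w z = c x w := fun z hz hzw =>
    (hP.color_eq_of_eq_or_eq hc hx hex hw hz (Ne.symm hzw) hxw).symm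
  obtain ⟨z₀, hz₀, hz₀w⟩ := hP.exists_part_ne w
  refine ⟨insert_subset_insert x (filter_subset _ _), insert_nonempty _ _,
    ⟨z₀, by simp [hz₀, hz₀w, ne_of_mem_of_not_mem hz₀ hx]⟩, fun u hu z hz => ?_⟩
  simp only [mem_sdiff, mem_insert, mem_filter, not_or, not_and] at hu hz
  obtain ⟨hzW, hzx, hzw⟩ := hz
  have hz : z ∈ W := hzW.resolve_left hzx
  replace hzw := hzw hz
  rcases hu with rfl | ⟨hu, huw⟩
  · by_cases hxz : c u z = a ∨ c u z = b
    · right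
      rw [hP.color_eq_of_eq_or_eq hc hx hex hz hw hzw hxz, hc.symm, hwz z hz hzw]
    · push Not at hxz
      exact Or.inl (hP.color_eq_of_ne_of_ne hc hx hex hz hy₀ hxz.1 hxz.2 hy₀a hy₀b)
  · right
    rw [hc.symm, hP.color_eq z hz u hu w hw (huw ▸ hzw) huw, hc.symm, hwz z hz hzw]

theorem exists_isTwoColorCut_insert (hP : IsGallaiPartition c W part a b) (hc : IsGallai c)
    (hx : x ∉ W) : ∃ U a' b', IsTwoColorCut c (insert x W) U a' b' := by
  by_cases hex : ∀ p ∈ W, ∃ y ∈ W, part y = part p ∧ c x y ≠ a ∧ c x y ≠ b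
  · obtain ⟨p, hp, -⟩ := hP.exists_ne
    obtain ⟨y₀, hy₀, -, hy₀a, hy₀b⟩ := hex p hp
    by_cases hall : ∀ z ∈ W, c x z ≠ a ∧ c x z ≠ b
    · exact ⟨_, _, _, isTwoColorCut_singleton_insert hx ⟨p, hp⟩ fun z hz =>
        hP.color_eq_of_ne_of_ne hc hx hex hz hy₀ (hall z hz).1 (hall z hz).2 hy₀a hy₀b⟩
    · push Not at hall
      obtain ⟨w, hw, hxw⟩ := hall
      exact ⟨_, _, _, hP.isTwoColorCut_insert_insert_part hc hx hex hy₀ hy₀a hy₀b hw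
        (or_iff_not_imp_left.2 hxw)⟩
  · push Not at hex
    obtain ⟨p, hp, hpx⟩ := hex
    exact ⟨_, a, b, hP.isTwoColorCut_insert_part hc hx hp fun y hy hyp =>
      or_iff_not_imp_left.2 (hpx y hy hyp)⟩

end IsGallaiPartition

theorem IsGallai.exists_isGallaiPartition (hc : IsGallai c) {W : Finset V}
    (hW : 2 ≤ #W) : ∃ (part : V → Set V) (a b : α), IsGallaiPartition c W part a b := by
  induction W using Finset.strongInduction with
  | H W ih =>
  suffices ∃ U a b, IsTwoColorCut c W U a b by
    obtain ⟨U, a, b, hU⟩ := this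
    exact ⟨_, a, b, hU.isGallaiPartition hc⟩
  obtain ⟨x, hx⟩ : W.Nonempty := card_pos.1 (by omega)
  rw [← insert_erase hx]
  by_cases h : 2 ≤ #(W.erase x)
  · obtain ⟨part, a, b, hP⟩ := ih _ (erase_ssubset hx) h
    classical
    exact hP.exists_isTwoColorCut_insert hc (notMem_erase x W)
  · obtain ⟨y, hy⟩ := card_eq_one.1 (show #(W.erase x) = 1 by
      have := card_erase_of_mem hx
      omega)
    refine ⟨_, _, _, isTwoColorCut_singleton_insert (e := c x y) (notMem_erase x W)
      ⟨y, by simp [hy]⟩ fun z hz => ?_⟩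
    rw [hy, mem_singleton] at hz
    rw [hz]

end Cut

section Chromatic

variable {V : Type*} {G G' : SimpleGraph V}

theorem toNat_chromaticNumber_induce_le_card_image {β : Type*} [DecidableEq β]
    (C : G.Coloring β) (s : Finset V) :
    (G.induce s).chromaticNumber.toNat ≤ #(s.image C) := by
  have h := (SimpleGraph.Coloring.mk (G := G.induce s)
    (fun v => (⟨C v, mem_image_of_mem C v.2⟩ : s.image C))
    fun h heq => C.valid h (congrArg Subtype.val heq)).colorable
  rw [Fintype.card_coe] at h
  exact ENat.toNat_le_of_le_natCast h.chromaticNumber_le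

variable [Fintype V]

theorem toNat_chromaticNumber_induce_le (s : Set V) :
    (G.induce s).chromaticNumber.toNat ≤ G.chromaticNumber.toNat :=
  ENat.toNat_le_toNat
    (SimpleGraph.chromaticNumber_mono_of_hom (SimpleGraph.Embedding.induce s).toHom)
    (SimpleGraph.chromaticNumber_ne_top_iff_exists.2 ⟨_, G.colorable_of_fintype⟩)

theorem toNat_chromaticNumber_pos [Nonempty V] : 0 < G.chromaticNumber.toNat :=
  Nat.pos_of_ne_zero fun h => (SimpleGraph.colorable_zero_iff.1
    (h ▸ G.colorable_chromaticNumber_of_fintype)).false (Classical.arbitrary V)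

variable {ι : Type*} {I : Finset ι} {P : ι → Finset V}

/-- Colourings of distinct parts use disjoint colour sets. -/
theorem sum_toNat_chromaticNumber_induce_le
    (h : ∀ i ∈ I, ∀ j ∈ I, i ≠ j → ∀ u ∈ P i, ∀ v ∈ P j, G.Adj u v) :
    ∑ i ∈ I, (G.induce (P i)).chromaticNumber.toNat ≤ G.chromaticNumber.toNat := by
  obtain ⟨C⟩ := G.colorable_chromaticNumber_of_fintype
  have hdisj : (I : Set ι).PairwiseDisjoint fun i => (P i).image C := by
    intro i hi j hj hij
    simp only [Function.onFun, disjoint_left, mem_image, not_exists, not_and]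
    rintro _ ⟨u, hu, rfl⟩ v hv hvu
    exact C.valid (h i hi j hj hij u hu v hv) hvu.symm
  calc ∑ i ∈ I, (G.induce (P i)).chromaticNumber.toNat
      ≤ ∑ i ∈ I, #((P i).image C) :=
        sum_le_sum fun i _ => toNat_chromaticNumber_induce_le_card_image C (P i)
    _ = #(I.biUnion fun i => (P i).image C) := (card_biUnion hdisj).symm
    _ ≤ G.chromaticNumber.toNat := (card_le_univ _).trans_eq (Fintype.card_fin _)

/-- For a `G`-colouring `C` and a `G'`-colouring `C'`, the sets `C '' P i ×ˢ C' '' P i` are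
pairwise disjoint. -/
theorem sum_mul_toNat_chromaticNumber_induce_le
    (h : ∀ i ∈ I, ∀ j ∈ I, i ≠ j →
      (∀ u ∈ P i, ∀ v ∈ P j, G.Adj u v) ∨ ∀ u ∈ P i, ∀ v ∈ P j, G'.Adj u v) :
    ∑ i ∈ I, (G.induce (P i)).chromaticNumber.toNat * (G'.induce (P i)).chromaticNumber.toNat ≤
      G.chromaticNumber.toNat * G'.chromaticNumber.toNat := by
  obtain ⟨C⟩ := G.colorable_chromaticNumber_of_fintype
  obtain ⟨C'⟩ := G'.colorable_chromaticNumber_of_fintype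
  set T := fun i => (P i).image C ×ˢ (P i).image C'
  have hdisj : (I : Set ι).PairwiseDisjoint T := by
    intro i hi j hj hij
    simp only [T, Function.onFun, disjoint_left, mem_product, mem_image, not_and, not_exists]
    rintro ⟨_, _⟩ ⟨⟨u, hu, rfl⟩, ⟨u', hu', rfl⟩⟩ ⟨v, hv, hvu⟩ v' hv' hvu'
    rcases h i hi j hj hij with hG | hG'
    · exact C.valid (hG u hu v hv) hvu.symm
    · exact C'.valid (hG' u' hu' v' hv') hvu'.symm
  calc ∑ i ∈ I, (G.induce (P i)).chromaticNumber.toNat * (G'.induce (P i)).chromaticNumber.toNat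
      ≤ ∑ i ∈ I, #(T i) := sum_le_sum fun i _ => by
        rw [card_product]
        exact Nat.mul_le_mul (toNat_chromaticNumber_induce_le_card_image C (P i))
          (toNat_chromaticNumber_induce_le_card_image C' (P i))
    _ = #(I.biUnion T) := (card_biUnion hdisj).symm
    _ ≤ G.chromaticNumber.toNat * G'.chromaticNumber.toNat :=
        (card_le_univ _).trans_eq (by simp)

end Chromatic

section Combination

variable {ι κ : Type*} {s : Finset ι}

theorem prod_rpow_le_sum (hs : s.Nonempty) {n y : ι → ℝ} (hn : ∀ i ∈ s, 0 < n i)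
    (hy : ∀ i ∈ s, 0 ≤ y i) :
    ∏ i ∈ s, ((∑ j ∈ s, n j) * y i / n i) ^ (n i / ∑ j ∈ s, n j) ≤ ∑ i ∈ s, y i := by
  have hN : 0 < ∑ j ∈ s, n j := sum_pos hn hs
  convert Real.geom_mean_le_arith_mean_weighted s (fun i => n i / ∑ j ∈ s, n j)
    (fun i => (∑ j ∈ s, n j) * y i / n i) (fun i hi => (div_pos (hn i hi) hN).le)
    (by rw [← sum_div, div_self hN.ne'])
    (fun i hi => div_nonneg (mul_nonneg hN.le (hy i hi)) (hn i hi).le) using 1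
  refine sum_congr rfl fun i hi => ?_
  have := (hn i hi).ne'
  field_simp

theorem prod_rpow_le_of_le {θ y : ι → ℝ} {M : ℝ} (hθ : ∀ i ∈ s, 0 ≤ θ i)
    (hθ1 : ∑ i ∈ s, θ i = 1) (hy : ∀ i ∈ s, 0 ≤ y i) (hyM : ∀ i ∈ s, y i ≤ M) :
    ∏ i ∈ s, y i ^ θ i ≤ M := by
  obtain rfl | hs := s.eq_empty_or_nonempty
  · simp at hθ1
  obtain ⟨i, hi⟩ := hs
  calc ∏ i ∈ s, y i ^ θ i ≤ ∏ i ∈ s, M ^ θ i :=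
        prod_le_prod (fun i hi => Real.rpow_nonneg (hy i hi) _)
          fun i hi => Real.rpow_le_rpow (hy i hi) (hyM i hi) (hθ i hi)
    _ = M := by
        rw [← Real.rpow_sum_of_nonneg ((hy i hi).trans (hyM i hi)) hθ, hθ1, Real.rpow_one]

theorem le_prod_rpow_of_le {θ y : ι → ℝ} {M : ℝ} (hθ : ∀ i ∈ s, 0 ≤ θ i)
    (hθ1 : ∑ i ∈ s, θ i = 1) (hM : 0 ≤ M) (hMy : ∀ i ∈ s, M ≤ y i) :
    M ≤ ∏ i ∈ s, y i ^ θ i := by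
  calc M = ∏ i ∈ s, M ^ θ i := by rw [← Real.rpow_sum_of_nonneg hM hθ, hθ1, Real.rpow_one]
    _ ≤ ∏ i ∈ s, y i ^ θ i :=
        prod_le_prod (fun i _ => Real.rpow_nonneg hM _)
          fun i hi => Real.rpow_le_rpow hM (hMy i hi) (hθ i hi)

/-- With `N = ∑ n` and the weights `θ i = n i / N`, weighted AM-GM bounds `F k` below by the
weighted geometric mean of the `N * y k i / n i` for `k ∈ B`, and of the `y k i` for `k ∈ C`.
For each part, these numbers multiply to at least `(N / n i) ^ t * n i ^ t = N ^ t`. -/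
theorem sum_pow_le_prod_of_forall_pow_le (hs : s.Nonempty) {n : ι → ℕ} (hn : ∀ i ∈ s, 0 < n i)
    {t : ℕ} {B C : Finset κ} (ht : t ≤ #B) {y : κ → ι → ℕ} {F : κ → ℕ}
    (hB : ∀ k ∈ B, ∑ i ∈ s, y k i ≤ F k) (hC : ∀ k ∈ C, ∀ i ∈ s, y k i ≤ F k)
    (hy : ∀ i ∈ s, n i ^ t ≤ (∏ k ∈ B, y k i) * ∏ k ∈ C, y k i) :
    (∑ i ∈ s, n i) ^ t ≤ (∏ k ∈ B, F k) * ∏ k ∈ C, F k := by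
  set N : ℝ := ∑ i ∈ s, (n i : ℝ)
  have hn' : ∀ i ∈ s, (0 : ℝ) < n i := fun i hi => Nat.cast_pos.2 (hn i hi)
  have hN : 0 < N := sum_pos hn' hs
  set θ : ι → ℝ := fun i => n i / N
  have hθ : ∀ i ∈ s, 0 ≤ θ i := fun i hi => (div_pos (hn' i hi) hN).le
  have hθ1 : ∑ i ∈ s, θ i = 1 := by rw [← sum_div, div_self hN.ne']
  set z : κ → ι → ℝ := fun k i => N * y k i / n i
  have hzB : ∀ k ∈ B, ∏ i ∈ s, z k i ^ θ i ≤ F k := fun k hk =>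
    (prod_rpow_le_sum hs hn' fun i _ => Nat.cast_nonneg _).trans (by exact_mod_cast hB k hk)
  have hyC : ∀ k ∈ C, ∏ i ∈ s, (y k i : ℝ) ^ θ i ≤ F k := fun k hk =>
    prod_rpow_le_of_le hθ hθ1 (fun i _ => Nat.cast_nonneg _) fun i hi => by
      exact_mod_cast hC k hk i hi
  have hpart : ∀ i ∈ s, N ^ t ≤ (∏ k ∈ B, z k i) * ∏ k ∈ C, (y k i : ℝ) := by
    intro i hi
    have hNn : 1 ≤ N / n i :=
      (one_le_div (hn' i hi)).2 (single_le_sum (fun j hj => (hn' j hj).le) hi)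
    calc N ^ t = (N / n i) ^ t * (n i : ℝ) ^ t := by
          rw [← mul_pow, div_mul_cancel₀ _ (hn' i hi).ne']
      _ ≤ (N / n i) ^ #B * ((∏ k ∈ B, (y k i : ℝ)) * ∏ k ∈ C, (y k i : ℝ)) :=
          mul_le_mul (pow_le_pow_right₀ hNn ht) (by exact_mod_cast hy i hi) (by positivity)
            (by positivity)
      _ = (∏ k ∈ B, z k i) * ∏ k ∈ C, (y k i : ℝ) := by
          simp only [z, mul_div_right_comm, prod_mul_distrib, prod_const]
          ring
  have hz : ∀ k i, 0 ≤ z k i := fun k i => by positivity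
  have hprod : ∏ i ∈ s, ((∏ k ∈ B, z k i) * ∏ k ∈ C, (y k i : ℝ)) ^ θ i =
      (∏ k ∈ B, ∏ i ∈ s, z k i ^ θ i) * ∏ k ∈ C, ∏ i ∈ s, (y k i : ℝ) ^ θ i := by
    rw [prod_comm (s := B), prod_comm (s := C), ← prod_mul_distrib]
    refine prod_congr rfl fun i _ => ?_
    rw [Real.mul_rpow (prod_nonneg fun k _ => hz k i) (by positivity),
      Real.finsetProd_rpow _ _ (fun k _ => hz k i),
      Real.finsetProd_rpow _ _ fun k _ => by positivity]
  have hreal : N ^ t ≤ (∏ k ∈ B, (F k : ℝ)) * ∏ k ∈ C, (F k : ℝ) := by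
    calc N ^ t ≤ ∏ i ∈ s, ((∏ k ∈ B, z k i) * ∏ k ∈ C, (y k i : ℝ)) ^ θ i :=
          le_prod_rpow_of_le hθ hθ1 (by positivity) hpart
      _ = _ := hprod
      _ ≤ _ := mul_le_mul (prod_le_prod (fun k _ => by positivity) hzB)
          (prod_le_prod (fun k _ => by positivity) hyC) (by positivity) (by positivity)
  rw [← Nat.cast_le (α := ℝ)]
  push_cast
  exact hreal

end Combination

section Pairing

variable {α M : Type*} [DecidableEq α] [CommMonoid M]

def pairedProd (a b : α) (g : Finset α → M) (S : Finset α) : M :=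
  g S * if a ∈ S ∧ b ∉ S then g (S.map (Equiv.swap a b).toEmbedding) else 1

theorem prod_eq_mul_prod_pairedProd (a b : α) {𝒜 : Finset (Finset α)}
    (h𝒜 : ∀ S ∈ 𝒜, S.map (Equiv.swap a b).toEmbedding ∈ 𝒜) (g : Finset α → M) :
    ∏ S ∈ 𝒜, g S =
      (∏ S ∈ 𝒜 with a ∈ S, pairedProd a b g S) *
        ∏ S ∈ 𝒜 with a ∉ S ∧ b ∉ S, pairedProd a b g S := by
  simp only [pairedProd]
  set τ : Finset α → Finset α := fun S => S.map (Equiv.swap a b).toEmbedding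
  have hτ : ∀ S, τ (τ S) = S := fun S => by ext x; simp [τ, mem_map_equiv]
  have hmem : ∀ {x S}, x ∈ τ S ↔ Equiv.swap a b x ∈ S := fun {x S} => by
    simp [τ, mem_map_equiv]
  have hswap : ∏ S ∈ 𝒜 with a ∈ S ∧ b ∉ S, g (τ S) = ∏ S ∈ 𝒜 with a ∉ S ∧ b ∈ S, g S := by
    refine prod_nbij' τ τ (fun S hS => ?_) (fun S hS => ?_) (fun S _ => hτ S) (fun S _ => hτ S)
      fun S _ => rfl
    all_goals
      rw [mem_filter] at hS ⊢
      exact ⟨h𝒜 S hS.1, by simp [hmem, hS.2]⟩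
  have hite : ∏ S ∈ 𝒜 with a ∈ S, (if a ∈ S ∧ b ∉ S then g (τ S) else 1) =
      ∏ S ∈ 𝒜 with a ∈ S ∧ b ∉ S, g (τ S) := by
    rw [← filter_filter, prod_filter (fun S => b ∉ S)]
    exact prod_congr rfl fun S hS => by simp [(mem_filter.1 hS).2]
  have hD : ∏ S ∈ 𝒜 with a ∉ S ∧ b ∉ S, (g S * if a ∈ S ∧ b ∉ S then g (τ S) else 1) =
      ∏ S ∈ 𝒜 with a ∉ S ∧ b ∉ S, g S :=
    prod_congr rfl fun S hS => by simp [(mem_filter.1 hS).2.1]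
  rw [hD, prod_mul_distrib, hite, hswap, mul_assoc, ← filter_filter, ← filter_filter,
    prod_filter_mul_prod_filter_not, prod_filter_mul_prod_filter_not]

end Pairing

theorem card_filter_mem_powersetCard_univ {α : Type*} [Fintype α] [DecidableEq α] {s : ℕ}
    (hs : 0 < s) (a : α) :
    #{S ∈ powersetCard s (univ : Finset α) | a ∈ S} = (Fintype.card α - 1).choose (s - 1) := by
  have := card_filter_powersetCard_subset {a} univ s (by simp) (by simpa)
  simpa using this

section ColorGraph

variable {V α : Type*}

def colorGraph (c : V → V → α) (S : Finset α) : SimpleGraph V :=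
  SimpleGraph.fromRel fun u v => c u v ∈ S

theorem colorGraph_comp_subtype (c : V → V → α) (S : Finset α) (s : Set V) :
    colorGraph (fun u v : s => c u v) S = (colorGraph c S).induce s := by
  ext u v
  simp [colorGraph, Subtype.val_injective.ne_iff]

end ColorGraph

section Main

variable {V α : Type*} [Fintype V] [DecidableEq V] [DecidableEq α] {c : V → V → α}

theorem IsGallaiPartition.sum_pairedProd_le {ι : Type*} [DecidableEq ι] {part : V → ι} {a b : α}
    (hP : IsGallaiPartition c univ part a b) (hc : IsGallai c) (I : Finset ι) {S : Finset α}
    (haS : a ∈ S) :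
    ∑ i ∈ I, pairedProd a b
        (fun S => ((colorGraph c S).induce ({v | part v = i} : Finset V)).chromaticNumber.toNat) S ≤
      pairedProd a b (fun S => (colorGraph c S).chromaticNumber.toNat) S := by
  have hadj : ∀ {S u v}, part u ≠ part v → c u v ∈ S → (colorGraph c S).Adj u v :=
    fun huv hS => ⟨fun h => huv (h ▸ rfl), Or.inl hS⟩
  have hmem : ∀ {u i}, u ∈ ({v | part v = i} : Finset V) ↔ part u = i := by simp
  by_cases hbS : b ∈ S
  · simp only [pairedProd, haS, hbS, not_true, and_false, if_false, mul_one]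
    refine sum_toNat_chromaticNumber_induce_le fun i _ j _ hij u hu v hv => ?_
    rw [hmem] at hu hv
    refine hadj (hu ▸ hv ▸ hij) ?_
    rcases hP.cross u (mem_univ u) v (mem_univ v) (hu ▸ hv ▸ hij) with h | h <;> rw [h]
    exacts [haS, hbS]
  simp only [pairedProd, haS, hbS, not_false_eq_true, and_self, if_true]
  refine sum_mul_toNat_chromaticNumber_induce_le fun i _ j _ hij => ?_
  by_cases hall : ∀ u ∈ ({v | part v = i} : Finset V), ∀ v ∈ ({v | part v = j} : Finset V),
      c u v = a
  · refine Or.inl fun u hu v hv => hadj ?_ (hall u hu v hv ▸ haS)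
    rwa [hmem.1 hu, hmem.1 hv]
  push Not at hall
  obtain ⟨u₀, hu₀, v₀, hv₀, h₀⟩ := hall
  rw [hmem] at hu₀ hv₀
  have hb := (hP.cross u₀ (mem_univ _) v₀ (mem_univ _) (hu₀ ▸ hv₀ ▸ hij)).resolve_left h₀
  refine Or.inr fun u hu v hv => ?_
  rw [hmem] at hu hv
  refine hadj (hu ▸ hv ▸ hij) ?_
  rw [hP.color_eq_of_part_eq hc (mem_univ u) (mem_univ u₀) (mem_univ v) (mem_univ v₀)
    (hu.trans hu₀.symm) (hv.trans hv₀.symm) (hu ▸ hv ▸ hij), hb]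
  simp [mem_map_equiv, haS]

variable [Fintype α]

theorem card_pow_le_prod_of_isGallaiPartition (hc : IsGallai c) {ι : Type*} [DecidableEq ι]
    {part : V → ι} {a b : α} (hP : IsGallaiPartition c univ part a b) {s t : ℕ}
    (ht : t ≤ #{S ∈ powersetCard s (univ : Finset α) | a ∈ S})
    (hparts : ∀ i ∈ univ.image part, #{v | part v = i} ^ t ≤
      ∏ S ∈ powersetCard s univ,
        ((colorGraph c S).induce ({v | part v = i} : Finset V)).chromaticNumber.toNat) :
    Fintype.card V ^ t ≤ ∏ S ∈ powersetCard s univ, (colorGraph c S).chromaticNumber.toNat := by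
  have hτ : ∀ S ∈ powersetCard s (univ : Finset α),
      S.map (Equiv.swap a b).toEmbedding ∈ powersetCard s univ := fun S hS => by
    simpa using hS
  have : Nonempty V := let ⟨v, _⟩ := hP.exists_ne; ⟨v⟩
  rw [← card_univ, card_eq_sum_card_image part univ, prod_eq_mul_prod_pairedProd a b hτ]
  refine sum_pow_le_prod_of_forall_pow_le (univ_nonempty.image part) ?_ ht
    (fun S hS => hP.sum_pairedProd_le hc _ (mem_filter.1 hS).2) (fun S hS i _ => ?_)
    fun i hi => ?_
  · simp only [mem_image, mem_univ, true_and, forall_exists_index, forall_apply_eq_imp_iff]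
    exact fun v => card_pos.2 ⟨v, by simp⟩
  · simp only [pairedProd, (mem_filter.1 hS).2.1, false_and, if_false, mul_one]
    exact toNat_chromaticNumber_induce_le _
  · rw [← prod_eq_mul_prod_pairedProd a b hτ]
    exact hparts i hi

theorem card_pow_le_prod_toNat_chromaticNumber [Nonempty V] (hc : IsGallai c) {s : ℕ}
    (hs : 0 < s) :
    Fintype.card V ^ (Fintype.card α - 1).choose (s - 1) ≤
      ∏ S ∈ powersetCard s univ, (colorGraph c S).chromaticNumber.toNat := by
  induction h : Fintype.card V using Nat.strong_induction_on generalizing V with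
  | _ N ih =>
  classical
  rcases Nat.lt_or_ge N 2 with hN | hN
  · rw [show N = 1 by have := Fintype.card_pos (α := V); omega, one_pow]
    exact one_le_prod' fun S _ => toNat_chromaticNumber_pos
  obtain ⟨part, a, b, hP⟩ := hc.exists_isGallaiPartition (W := univ) (by rw [card_univ]; omega)
  rw [← h]
  refine card_pow_le_prod_of_isGallaiPartition hc hP (card_filter_mem_powersetCard_univ hs a).ge
    fun i hi => ?_
  set P : Finset V := {v | part v = i}
  obtain ⟨v, -, hv⟩ := mem_image.1 hi
  have : Nonempty (P : Set V) := ⟨⟨v, by simp [P, hv]⟩⟩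
  have hlt : #P < N := by
    obtain ⟨u, -, w, -, huw⟩ := hP.exists_ne
    rw [← h, ← card_univ]
    refine card_lt_card ⟨subset_univ _, fun hsub => huw ?_⟩
    have hu := mem_filter.1 (hsub (mem_univ u))
    have hw := mem_filter.1 (hsub (mem_univ w))
    rw [hu.2, hw.2]
  have := ih _ hlt (c := fun u v : (P : Set V) => c u v) (hc.comp Subtype.val_injective) (by simp)
  simpa only [colorGraph_comp_subtype] using this

end Main

end Gallai

theorem stmt_2_general (r s n : ℕ) (hs : 0 < s) (hn : 0 < n)
    (c : Fin n → Fin n → Fin r)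
    (hsym : ∀ u v, c u v = c v u)
    (hGallai : ∀ u v w : Fin n, u ≠ v → v ≠ w → u ≠ w →
      ¬(c u v ≠ c v w ∧ c v w ≠ c u w ∧ c u v ≠ c u w)) :
    (n : ℕ∞) ^ (Nat.choose (r - 1) (s - 1)) ≤
      ∏ S ∈ Finset.powersetCard s (Finset.univ : Finset (Fin r)),
        (SimpleGraph.fromRel fun u v => c u v ∈ S).chromaticNumber := by
  have hc : Gallai.IsGallai c := ⟨hsym, fun u v w huv hvw huw => by
    have := hGallai u v w huv hvw huw
    tauto⟩
  have : Nonempty (Fin n) := ⟨⟨0, hn⟩⟩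
  have h := Gallai.card_pow_le_prod_toNat_chromaticNumber hc hs
  rw [Fintype.card_fin, Fintype.card_fin] at h
  calc (n : ℕ∞) ^ (r - 1).choose (s - 1) ≤
        ((∏ S ∈ powersetCard s univ, (Gallai.colorGraph c S).chromaticNumber.toNat : ℕ) : ℕ∞) := by
        exact_mod_cast h
    _ = _ := by
        push_cast
        refine prod_congr rfl fun S _ => ENat.natCast_toNat ?_
        exact SimpleGraph.chromaticNumber_ne_top_iff_exists.2
          ⟨_, SimpleGraph.colorable_of_fintype _⟩

/-- Given a Gallai `r`-coloring of `K_n` (positive integers `s ≤ r`, `n ≥ 1`), the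
product over all `s`-element color sets `S` of the chromatic numbers `χ(G_S)` is at
least `n ^ (r-1 choose s-1)`. Colors are elements of `Fin r`. -/
theorem stmt_2 (r s n : ℕ) (hr : 0 < r) (hs : 0 < s) (hn : 0 < n) (hsr : s ≤ r)
    (c : Fin n → Fin n → Fin r)
    (hsym : ∀ u v, c u v = c v u)
    (hGallai : ∀ u v w : Fin n, u ≠ v → v ≠ w → u ≠ w →
      ¬(c u v ≠ c v w ∧ c v w ≠ c u w ∧ c u v ≠ c u w)) :
    (n : ℕ∞) ^ (Nat.choose (r - 1) (s - 1)) ≤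
      ∏ S ∈ Finset.powersetCard s (Finset.univ : Finset (Fin r)),
        (SimpleGraph.fromRel fun u v => c u v ∈ S).chromaticNumber :=
  stmt_2_general r s n hs hn c hsym hGallai
end

section
/- Let c be an r-coloring of the edges of K_n with color set [r], let q1 ≠ q2 be two colors, and let V_1, ..., V_m be a partition of the vertex set such that for each pair of distinct indices i, j, all edges between V_i and V_j have the same color, and this color is q1 or q2. Let S ⊆ [r] with q1 ∈ S and q2 ∉ S, and set S* = (S ∪ {q2}) \ {q1}. Then χ(G_S)·χ(G_{S*}) ≥ Σ_{i=1}^m χ(G_S[V_i])·χ(G_{S*}[V_i]), where G_S[V_i] denotes the subgraph of G_S induced on V_i. -/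
/-- Let `c` be an `r`-coloring of the edges of `K_n`, `q1 ≠ q2` two colors, and
`part : Fin n → Fin m` a partition of the vertices into nonempty parts such that all
edges between two distinct parts have a single color which is `q1` or `q2`.
If `q1 ∈ S`, `q2 ∉ S` and `S* = (S ∪ {q2}) \ {q1}`, then
`χ(G_S)·χ(G_{S*}) ≥ Σ_i χ(G_S[V_i])·χ(G_{S*}[V_i])`. -/
theorem stmt_5 (n r m : ℕ) (c : Fin n → Fin n → Fin r)
    (hsym : ∀ u v, c u v = c v u)
    (q1 q2 : Fin r) (hq : q1 ≠ q2)
    (part : Fin n → Fin m) (hsurj : Function.Surjective part)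
    (hpart : ∀ i j : Fin m, i ≠ j → ∃ q : Fin r, (q = q1 ∨ q = q2) ∧
      ∀ u v : Fin n, part u = i → part v = j → c u v = q)
    (S : Finset (Fin r)) (hq1S : q1 ∈ S) (hq2S : q2 ∉ S) :
    ∑ i : Fin m,
        ((SimpleGraph.fromRel fun u v => c u v ∈ S).induce
            {v | part v = i}).chromaticNumber *
        ((SimpleGraph.fromRel fun u v => c u v ∈ insert q2 (S.erase q1)).induce
            {v | part v = i}).chromaticNumber
      ≤ (SimpleGraph.fromRel fun u v => c u v ∈ S).chromaticNumber *
        (SimpleGraph.fromRel fun u v => c u v ∈ insert q2 (S.erase q1)).chromaticNumber := by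
  classical
  set G := SimpleGraph.fromRel fun u v => c u v ∈ S with hG
  set H := SimpleGraph.fromRel fun u v => c u v ∈ insert q2 (S.erase q1) with hH
  set a := G.chromaticNumber.toNat with ha
  set b := H.chromaticNumber.toNat with hb
  have hGne : G.chromaticNumber ≠ ⊤ :=
    (lt_of_le_of_lt (G.colorable_of_fintype.chromaticNumber_le) (by simp)).ne
  have hHne : H.chromaticNumber ≠ ⊤ :=
    (lt_of_le_of_lt (H.colorable_of_fintype.chromaticNumber_le) (by simp)).ne
  have hGa : G.chromaticNumber = (a : ℕ∞) := (ENat.coe_toNat hGne).symm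
  have hHb : H.chromaticNumber = (b : ℕ∞) := (ENat.coe_toNat hHne).symm
  obtain ⟨f⟩ := G.colorable_chromaticNumber_of_fintype
  obtain ⟨g⟩ := H.colorable_chromaticNumber_of_fintype
  set A : Fin m → Finset (Fin a) :=
    fun i => (Finset.univ.filter fun u => part u = i).image f with hA
  set B : Fin m → Finset (Fin b) :=
    fun i => (Finset.univ.filter fun u => part u = i).image g with hB
  -- chromatic number of induced subgraphs bounded by card of images
  have hGi : ∀ i, (G.induce {v | part v = i}).chromaticNumber ≤ ((A i).card : ℕ∞) := by
    intro i
    have C : (G.induce {v | part v = i}).Coloring (A i) :=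
      SimpleGraph.Coloring.mk
        (fun v => ⟨f v.1, by
          simp only [hA, Finset.mem_image, Finset.mem_filter, Finset.mem_univ, true_and]
          exact ⟨v.1, v.2, rfl⟩⟩)
        (by
          intro u v h
          have : G.Adj u.1 v.1 := h
          simpa [Subtype.ext_iff] using f.valid this)
    have := C.colorable.chromaticNumber_le
    simpa using this
  have hHi : ∀ i, (H.induce {v | part v = i}).chromaticNumber ≤ ((B i).card : ℕ∞) := by
    intro i
    have C : (H.induce {v | part v = i}).Coloring (B i) :=
      SimpleGraph.Coloring.mk
        (fun v => ⟨g v.1, by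
          simp only [hB, Finset.mem_image, Finset.mem_filter, Finset.mem_univ, true_and]
          exact ⟨v.1, v.2, rfl⟩⟩)
        (by
          intro u v h
          have : H.Adj u.1 v.1 := h
          simpa [Subtype.ext_iff] using g.valid this)
    have := C.colorable.chromaticNumber_le
    simpa using this
  -- the rectangles are pairwise disjoint
  have hdisj : ∀ i ∈ (Finset.univ : Finset (Fin m)), ∀ j ∈ (Finset.univ : Finset (Fin m)),
      i ≠ j → Disjoint ((A i) ×ˢ (B i)) ((A j) ×ˢ (B j)) := by
    intro i _ j _ hij
    rw [Finset.disjoint_left]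
    rintro ⟨x, y⟩ hpi hpj
    simp only [Finset.mem_product, hA, hB, Finset.mem_image, Finset.mem_filter,
      Finset.mem_univ, true_and] at hpi hpj
    obtain ⟨⟨u, hu, hfu⟩, ⟨w, hw, hgw⟩⟩ := hpi
    obtain ⟨⟨u', hu', hfu'⟩, ⟨w', hw', hgw'⟩⟩ := hpj
    obtain ⟨q, hq12, hqc⟩ := hpart i j hij
    rcases hq12 with rfl | rfl
    · -- color q1: edge u u' is in G
      have hne : u ≠ u' := fun h => hij (hu ▸ hu' ▸ h ▸ rfl)
      have hadj : G.Adj u u' := by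
        rw [hG, SimpleGraph.fromRel_adj]
        exact ⟨hne, Or.inl (by rw [hqc u u' hu hu']; exact hq1S)⟩
      exact f.valid hadj (hfu.trans hfu'.symm)
    · -- color q2: edge w w' is in H
      have hne : w ≠ w' := fun h => hij (hw ▸ hw' ▸ h ▸ rfl)
      have hadj : H.Adj w w' := by
        rw [hH, SimpleGraph.fromRel_adj]
        exact ⟨hne, Or.inl (by rw [hqc w w' hw hw']; exact Finset.mem_insert_self _ _)⟩
      exact g.valid hadj (hgw.trans hgw'.symm)
  -- natural number inequality
  have hnat : (∑ i : Fin m, (A i).card * (B i).card) ≤ a * b := by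
    calc (∑ i : Fin m, (A i).card * (B i).card)
        = ∑ i : Fin m, ((A i) ×ˢ (B i)).card := by
          simp [Finset.card_product]
      _ = (Finset.univ.biUnion fun i => (A i) ×ˢ (B i)).card :=
          (Finset.card_biUnion hdisj).symm
      _ ≤ Fintype.card (Fin a × Fin b) := Finset.card_le_univ _
      _ = a * b := by simp
  calc (∑ i : Fin m,
        (G.induce {v | part v = i}).chromaticNumber *
        (H.induce {v | part v = i}).chromaticNumber)
      ≤ ∑ i : Fin m, ((A i).card : ℕ∞) * ((B i).card : ℕ∞) :=
        Finset.sum_le_sum fun i _ => mul_le_mul' (hGi i) (hHi i)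
    _ = ((∑ i : Fin m, (A i).card * (B i).card : ℕ) : ℕ∞) := by push_cast; rfl
    _ ≤ ((a * b : ℕ) : ℕ∞) := by exact_mod_cast hnat
    _ = G.chromaticNumber * H.chromaticNumber := by rw [hGa, hHb]; push_cast; rfl
end

section
/- Let F be a graph on vertex set [m], and for each i ∈ [m] let G_i and G'_i be graphs with χ(G_i) = χ(G'_i). Let G be the graph obtained by substituting G_i for vertex i of F (i.e., the vertex set is the disjoint union of the vertex sets of the G_i, edges inside the i-th part are those of G_i, and all edges between the i-th and j-th parts are present if and only if ij is an edge of F), and let H be the analogous substitution of the graphs G'_i into F. Then χ(G) = χ(H). -/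
/-- The substitution (blow-up) of the graphs `G i` into the graph `F` on `Fin m`:
the vertex set is the disjoint union `Σ i, α i`; two vertices in the same part `i`
are adjacent iff they are adjacent in `G i`, and two vertices in distinct parts
`i, j` are adjacent iff `ij` is an edge of `F`. -/
def blowup {m : ℕ} (F : SimpleGraph (Fin m)) {α : Fin m → Type*}
    (G : ∀ i, SimpleGraph (α i)) : SimpleGraph (Σ i, α i) :=
  SimpleGraph.fromRel fun x y =>
    if h : x.1 = y.1 then (G y.1).Adj (h ▸ x.2) y.2 else F.Adj x.1 y.1

lemma blowup_adj_same {m : ℕ} (F : SimpleGraph (Fin m)) {α : Fin m → Type*}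
    (G : ∀ i, SimpleGraph (α i)) {i : Fin m} {a b : α i} (h : (G i).Adj a b) :
    (blowup F G).Adj ⟨i, a⟩ ⟨i, b⟩ := by
  refine ⟨fun hc => h.ne (by simpa using hc), Or.inl ?_⟩
  show if hh : i = i then (G i).Adj (hh ▸ a) b else F.Adj i i
  rw [dif_pos rfl]
  exact h

lemma blowup_adj_cross {m : ℕ} (F : SimpleGraph (Fin m)) {α : Fin m → Type*}
    (G : ∀ i, SimpleGraph (α i)) {i j : Fin m} (hij : i ≠ j) (h : F.Adj i j)
    (a : α i) (b : α j) : (blowup F G).Adj ⟨i, a⟩ ⟨j, b⟩ := by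
  refine ⟨fun hc => hij (congrArg Sigma.fst hc), Or.inl ?_⟩
  show if hh : i = j then (G j).Adj (hh ▸ a) b else F.Adj i j
  rw [dif_neg hij]
  exact h

lemma blowup_adj_same_inv {m : ℕ} (F : SimpleGraph (Fin m)) {α : Fin m → Type*}
    (G : ∀ i, SimpleGraph (α i)) {i : Fin m} {a b : α i}
    (h : (blowup F G).Adj ⟨i, a⟩ ⟨i, b⟩) : (G i).Adj a b := by
  rcases h with ⟨-, h | h⟩
  · have h2 : if hh : i = i then (G i).Adj (hh ▸ a) b else F.Adj i i := h
    rw [dif_pos rfl] at h2; exact h2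
  · have h2 : if hh : i = i then (G i).Adj (hh ▸ b) a else F.Adj i i := h
    rw [dif_pos rfl] at h2; exact h2.symm

lemma blowup_adj_cross_inv {m : ℕ} (F : SimpleGraph (Fin m)) {α : Fin m → Type*}
    (G : ∀ i, SimpleGraph (α i)) {i j : Fin m} {a : α i} {b : α j} (hij : i ≠ j)
    (h : (blowup F G).Adj ⟨i, a⟩ ⟨j, b⟩) : F.Adj i j := by
  rcases h with ⟨-, h | h⟩
  · have h2 : if hh : i = j then (G j).Adj (hh ▸ a) b else F.Adj i j := h
    rw [dif_neg hij] at h2; exact h2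
  · have h2 : if hh : j = i then (G i).Adj (hh ▸ b) a else F.Adj j i := h
    rw [dif_neg (Ne.symm hij)] at h2; exact h2.symm

lemma blowup_colorable_of_le {m : ℕ} (F : SimpleGraph (Fin m))
    {α β : Fin m → Type} [∀ i, Fintype (α i)] [∀ i, Fintype (β i)]
    (G : ∀ i, SimpleGraph (α i)) (G' : ∀ i, SimpleGraph (β i))
    (h : ∀ i, (G i).chromaticNumber ≤ (G' i).chromaticNumber)
    (n : ℕ) (hc : (blowup F G').Colorable n) : (blowup F G).Colorable n := by
  classical
  obtain ⟨C'⟩ := hc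
  set S : Fin m → Finset (Fin n) := fun i =>
    Finset.image (fun b : β i => C' ⟨i, b⟩) Finset.univ with hSdef
  have hmem : ∀ (i : Fin m) (b : β i), C' ⟨i, b⟩ ∈ S i := fun i b =>
    Finset.mem_image_of_mem _ (Finset.mem_univ b)
  -- `G' i` is colorable with colors from `S i`
  have hS : ∀ i, (G' i).Colorable (S i).card := by
    intro i
    have C : (G' i).Coloring (S i) :=
      SimpleGraph.Coloring.mk (fun b => ⟨C' ⟨i, b⟩, hmem i b⟩)
        (fun {b b'} hadj hc => by
          exact C'.valid (blowup_adj_same F G' hadj) (by simpa using congrArg Subtype.val hc))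
    simpa [Fintype.card_coe] using C.colorable
  have hG : ∀ i, (G i).Colorable (S i).card := by
    intro i
    rw [← SimpleGraph.chromaticNumber_le_iff_colorable]
    exact le_trans (h i) (hS i).chromaticNumber_le
  -- pick colorings of each `G i` using colors from `S i`
  have hD : ∀ i, ∃ D : α i → Fin n, (∀ a, D a ∈ S i) ∧
      ∀ a b, (G i).Adj a b → D a ≠ D b := by
    intro i
    obtain ⟨D⟩ := hG i
    refine ⟨fun a => ((S i).equivFin.symm (D a) : Fin n), fun a => ?_, fun a b hadj hc => ?_⟩
    · exact ((S i).equivFin.symm (D a)).2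
    · exact D.valid hadj ((S i).equivFin.symm.injective (Subtype.val_injective hc))
  choose D hDmem hDvalid using hD
  refine ⟨SimpleGraph.Coloring.mk (fun x => D x.1 x.2) ?_⟩
  rintro ⟨i, a⟩ ⟨j, b⟩ hadj hc
  by_cases hij : i = j
  · subst hij
    exact hDvalid i a b (blowup_adj_same_inv F G hadj) hc
  · have hF : F.Adj i j := blowup_adj_cross_inv F G hij hadj
    have hc' : D i a = D j b := hc
    have h1 := hDmem i a
    have h2 := hDmem j b
    rw [hc'] at h1
    obtain ⟨b1, -, hb1⟩ := Finset.mem_image.mp h1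
    obtain ⟨b2, -, hb2⟩ := Finset.mem_image.mp h2
    exact C'.valid (blowup_adj_cross F G' hij hF b1 b2) (hb1.trans hb2.symm)

/-- If `F` is a graph on `[m]` and, for each `i`, the graphs `G i` and `G' i` have
the same chromatic number, then substituting the `G i` into `F` yields a graph with
the same chromatic number as substituting the `G' i` into `F`. -/
theorem stmt_6 {m : ℕ} (F : SimpleGraph (Fin m))
    {α β : Fin m → Type} [∀ i, Fintype (α i)] [∀ i, Fintype (β i)]
    (G : ∀ i, SimpleGraph (α i)) (G' : ∀ i, SimpleGraph (β i))
    (h : ∀ i, (G i).chromaticNumber = (G' i).chromaticNumber) :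
    (blowup F G).chromaticNumber = (blowup F G').chromaticNumber := by
  refine le_antisymm ?_ ?_
  · exact SimpleGraph.chromaticNumber_le_of_forall_imp
      (blowup_colorable_of_le F G G' (fun i => (h i).le))
  · exact SimpleGraph.chromaticNumber_le_of_forall_imp
      (blowup_colorable_of_le F G' G (fun i => (h i).ge))
end

section
/- For positive integers n ≥ 2 and r, the digit coloring of the complete graph on vertex set {0, 1, ..., n^r − 1} is a Gallai r-coloring, i.e., it contains no rainbow triangle. -/
/-- The digit coloring: the color of the pair `{i, j}` (for `i ≠ j` less than `n^r`)
is the position `d ∈ {1, …, r}`, counted from the most significant digit, of the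
leftmost digit in which the `r`-digit base-`n` representations of `i` and `j` differ.
(The digit of `i` at position `d` is `i / n^(r-d) % n`; for `i ≠ j < n^r` the set of
differing positions is a nonempty subset of `{1, …, r}`, and we take its minimum.) -/
noncomputable def digitColor (n r i j : ℕ) : ℕ :=
  sInf {d : ℕ | i / n ^ (r - d) % n ≠ j / n ^ (r - d) % n}

lemma digitSet_nonempty (n r i j : ℕ) (hn : 2 ≤ n)
    (hi : i < n ^ r) (hj : j < n ^ r) (hij : i ≠ j) :
    {d : ℕ | i / n ^ (r - d) % n ≠ j / n ^ (r - d) % n}.Nonempty := by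
  by_contra hne
  rw [Set.not_nonempty_iff_eq_empty, Set.eq_empty_iff_forall_notMem] at hne
  simp only [Set.mem_setOf_eq, not_not] at hne
  have key : ∀ m, i / n ^ (r - m) = j / n ^ (r - m) := by
    intro m
    induction m with
    | zero =>
      simp only [Nat.sub_zero]
      rw [Nat.div_eq_of_lt hi, Nat.div_eq_of_lt hj]
    | succ m ih =>
      rcases lt_or_ge m r with hm | hm
      · have hrm : r - m = (r - (m + 1)) + 1 := by omega
        have hpow : n ^ (r - m) = n ^ (r - (m + 1)) * n := by
          rw [hrm, pow_succ]
        have hdi : i / n ^ (r - m) = i / n ^ (r - (m + 1)) / n := by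
          rw [hpow, Nat.div_div_eq_div_mul]
        have hdj : j / n ^ (r - m) = j / n ^ (r - (m + 1)) / n := by
          rw [hpow, Nat.div_div_eq_div_mul]
        have hmod := hne (m + 1)
        have hi' := (Nat.div_add_mod (i / n ^ (r - (m + 1))) n).symm
        have hj' := (Nat.div_add_mod (j / n ^ (r - (m + 1))) n).symm
        rw [hi', hj', ← hdi, ← hdj, ih, hmod]
      · have : r - (m + 1) = r - m := by omega
        rw [this, ih]
  have := key r
  simp at this
  exact hij this

lemma digitColor_mem (n r i j : ℕ) (hn : 2 ≤ n)
    (hi : i < n ^ r) (hj : j < n ^ r) (hij : i ≠ j) :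
    i / n ^ (r - digitColor n r i j) % n ≠ j / n ^ (r - digitColor n r i j) % n :=
  Nat.sInf_mem (digitSet_nonempty n r i j hn hi hj hij)

lemma digitColor_notMem (n r i j d : ℕ) (hd : d < digitColor n r i j) :
    i / n ^ (r - d) % n = j / n ^ (r - d) % n := by
  by_contra h
  have := Nat.sInf_le (s := {d : ℕ | i / n ^ (r - d) % n ≠ j / n ^ (r - d) % n}) h
  rw [digitColor] at hd
  omega

/-- For `n ≥ 2` and `r ≥ 1`, the digit coloring of the complete graph on
`{0, 1, …, n^r − 1}` is a Gallai `r`-coloring: no three pairwise distinct vertices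
receive three pairwise distinct colors on their three edges. -/
theorem stmt_8 (n r : ℕ) (hn : 2 ≤ n) (hr : 0 < r)
    (i j k : ℕ) (hi : i < n ^ r) (hj : j < n ^ r) (hk : k < n ^ r)
    (hij : i ≠ j) (hjk : j ≠ k) (hik : i ≠ k) :
    ¬(digitColor n r i j ≠ digitColor n r j k ∧
      digitColor n r j k ≠ digitColor n r i k ∧
      digitColor n r i j ≠ digitColor n r i k) := by
  rintro ⟨h1, h2, h3⟩
  set a := digitColor n r i j with ha
  set b := digitColor n r j k with hb
  set c := digitColor n r i k with hc
  have hma := digitColor_mem n r i j hn hi hj hij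
  have hmb := digitColor_mem n r j k hn hj hk hjk
  have hmc := digitColor_mem n r i k hn hi hk hik
  rcases lt_trichotomy a b with hab | hab | hab
  · rcases lt_trichotomy a c with hac | hac | hac
    · -- a is strict min: digits j,k and i,k equal at a
      have e1 := digitColor_notMem n r j k a hab
      have e2 := digitColor_notMem n r i k a hac
      exact hma (e2.trans e1.symm)
    · exact h3 hac
    · -- c < a < b, c strict min
      have e1 := digitColor_notMem n r i j c hac
      have e2 := digitColor_notMem n r j k c (hac.trans hab)
      exact hmc (e1.trans e2)
  · exact h1 hab
  · rcases lt_trichotomy b c with hbc | hbc | hbc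
    · -- b < a, b < c: b strict min
      have e1 := digitColor_notMem n r i j b hab
      have e2 := digitColor_notMem n r i k b hbc
      exact hmb (e1.symm.trans e2)
    · exact h2 hbc
    · -- c < b < a: c strict min
      have e1 := digitColor_notMem n r i j c (hbc.trans hab)
      have e2 := digitColor_notMem n r j k c hbc
      exact hmc (e1.trans e2)
end

section
/- For positive integers n ≥ 2 and s ≤ r, consider the transitive tournament on vertex set {0, 1, ..., n^r − 1} (each edge between i < j is oriented from i to j) with its edges colored by the digit coloring. Then every directed path whose edges use at most s colors has at most n^s vertices. In particular, for m a perfect r-th power, there is an r-coloring of the transitive tournament on m vertices in which every directed path using at most s colors has at most m^{s/r} vertices. -/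
/-!
Let the edges of a path use only colours in `S`. For consecutive vertices `x < y` the
leftmost differing digit sits at a position `c ∈ S`, the digits above `c` agree, and `y` has
the larger digit at `c`. Hence the digits at the positions in `S`, read lexicographically,
increase strictly along the path, and there are only `n ^ |S|` such digit vectors.
-/

theorem List.length_le_card_of_isChain_lt {α β : Type*} [Preorder β] [Fintype β]
    (f : α → β) {l : List α} (h : l.IsChain fun a b => f a < f b) :
    l.length ≤ Fintype.card β := by
  have hsorted : (l.map f).Pairwise (· < ·) :=
    List.isChain_iff_pairwise.mp ((List.isChain_map f).mpr h)
  simpa using hsorted.nodup.length_le_card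

theorem Real.pow_rpow_div_natCast {x : ℝ} (hx : 0 ≤ x) (s : ℕ) {r : ℕ} (hr : r ≠ 0) :
    (x ^ r) ^ ((s : ℝ) / r) = x ^ s := by
  rw [← Real.rpow_natCast_mul hx, mul_div_cancel₀ _ (Nat.cast_ne_zero.mpr hr), Real.rpow_natCast]

namespace DigitColoring

/-- Positions are counted from the most significant of the `r` base-`n` digits, starting at
`1`; position `0` reads `x / n ^ r % n`, which vanishes for `x < n ^ r`. -/
def digitAt (n r x d : ℕ) : ℕ := x / n ^ (r - d) % n

variable {n r x y : ℕ}

theorem div_pow_sub_succ (x : ℕ) {k : ℕ} (hk : k < r) :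
    x / n ^ (r - (k + 1)) = n * (x / n ^ (r - k)) + digitAt n r x (k + 1) := by
  have hdiv : x / n ^ (r - k) = x / n ^ (r - (k + 1)) / n := by
    rw [show r - k = r - (k + 1) + 1 by omega, pow_succ, Nat.div_div_eq_div_mul]
  rw [hdiv, digitAt, Nat.div_add_mod]

theorem div_pow_sub_eq_of_digitAt_eq (hx : x < n ^ r) (hy : y < n ^ r) :
    ∀ k, (∀ d, 0 < d → d ≤ k → digitAt n r x d = digitAt n r y d) →
      x / n ^ (r - k) = y / n ^ (r - k)
  | 0, _ => by simp [Nat.div_eq_of_lt hx, Nat.div_eq_of_lt hy]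
  | k + 1, h => by
    have ih := div_pow_sub_eq_of_digitAt_eq hx hy k fun d hd hdk => h d hd (by omega)
    by_cases hkr : k < r
    · rw [div_pow_sub_succ x hkr, div_pow_sub_succ y hkr, ih, h (k + 1) k.succ_pos le_rfl]
    · rwa [show r - (k + 1) = r - k by omega]

theorem exists_digitAt_ne (hx : x < n ^ r) (hy : y < n ^ r) (hxy : x ≠ y) :
    ∃ d ≤ r, digitAt n r x d ≠ digitAt n r y d := by
  by_contra! h
  exact hxy (by simpa using div_pow_sub_eq_of_digitAt_eq hx hy r fun d _ hd => h d hd)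

theorem digitAt_zero (hx : x < n ^ r) : digitAt n r x 0 = 0 := by
  simp [digitAt, Nat.div_eq_of_lt hx]

theorem digitAt_eq_of_lt_digitColor {d : ℕ} (hd : d < digitColor n r x y) :
    digitAt n r x d = digitAt n r y d :=
  not_not.mp (Nat.notMem_of_lt_sInf hd)

theorem digitAt_digitColor_ne (hx : x < n ^ r) (hy : y < n ^ r) (hxy : x ≠ y) :
    digitAt n r x (digitColor n r x y) ≠ digitAt n r y (digitColor n r x y) :=
  have ⟨d, _, hd⟩ := exists_digitAt_ne hx hy hxy
  Nat.sInf_mem (s := {d | digitAt n r x d ≠ digitAt n r y d}) ⟨d, hd⟩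

theorem digitColor_le (hx : x < n ^ r) (hy : y < n ^ r) (hxy : x ≠ y) :
    digitColor n r x y ≤ r :=
  have ⟨_, hdr, hd⟩ := exists_digitAt_ne hx hy hxy
  (Nat.sInf_le hd).trans hdr

theorem digitColor_pos (hx : x < n ^ r) (hy : y < n ^ r) (hxy : x ≠ y) :
    0 < digitColor n r x y := by
  refine Nat.pos_of_ne_zero fun h0 => digitAt_digitColor_ne hx hy hxy ?_
  rw [h0, digitAt_zero hx, digitAt_zero hy]

theorem digitAt_lt_digitAt_digitColor (hx : x < n ^ r) (hy : y < n ^ r) (hxy : x < y) :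
    digitAt n r x (digitColor n r x y) < digitAt n r y (digitColor n r x y) := by
  have hc0 := digitColor_pos hx hy hxy.ne
  have hcr := digitColor_le hx hy hxy.ne
  have hne := digitAt_digitColor_ne hx hy hxy.ne
  have hprefix := div_pow_sub_eq_of_digitAt_eq hx hy (digitColor n r x y - 1)
    fun d _ hd => digitAt_eq_of_lt_digitColor (by omega)
  set c := digitColor n r x y
  have hxc := div_pow_sub_succ x (n := n) (show c - 1 < r by omega)
  have hyc := div_pow_sub_succ y (n := n) (show c - 1 < r by omega)
  rw [Nat.sub_add_cancel hc0] at hxc hyc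
  rw [hprefix] at hxc
  -- `x / n ^ (r - c)` and `y / n ^ (r - c)` now differ only in their last digit
  have hmono : x / n ^ (r - c) ≤ y / n ^ (r - c) := Nat.div_le_div_right hxy.le
  omega

def digitsOn (n r : ℕ) [NeZero n] (S : Finset ℕ) (x : ℕ) : Lex (S → Fin n) :=
  toLex fun d => ⟨digitAt n r x d, Nat.mod_lt _ (NeZero.pos n)⟩

theorem digitsOn_lt_digitsOn [NeZero n] {S : Finset ℕ} (hx : x < n ^ r) (hy : y < n ^ r)
    (hxy : x < y) (hS : digitColor n r x y ∈ S) : digitsOn n r S x < digitsOn n r S y :=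
  ⟨⟨_, hS⟩, fun _ hd => Fin.ext (digitAt_eq_of_lt_digitColor hd),
    digitAt_lt_digitAt_digitColor hx hy hxy⟩

theorem length_le_of_isChain_digitColor [NeZero n] (S : Finset ℕ) {l : List (Fin (n ^ r))}
    (hl : l.IsChain fun x y : Fin (n ^ r) => (x : ℕ) < y ∧ digitColor n r x y ∈ S) :
    l.length ≤ n ^ S.card :=
  calc l.length ≤ Fintype.card (Lex (S → Fin n)) :=
        List.length_le_card_of_isChain_lt (fun x : Fin (n ^ r) => digitsOn n r S x)
          (hl.imp fun x y h => digitsOn_lt_digitsOn x.isLt y.isLt h.1 h.2)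
    _ = n ^ S.card := by simp

/-- The digit coloring with its colours `1, …, r` shifted to `Fin r`; the `min` only keeps the
value in range on the diagonal, where `digitColor` is junk. -/
noncomputable def digitColorFin (n r : ℕ) (hr : 0 < r) (x y : ℕ) : Fin r :=
  ⟨min (digitColor n r x y) r - 1, by omega⟩

theorem length_le_of_isChain_digitColorFin (hr : 0 < r) {s : ℕ} {S : Finset (Fin r)}
    (hS : S.card ≤ s) {l : List (Fin (n ^ r))}
    (hl : l.IsChain fun x y : Fin (n ^ r) => x < y ∧ digitColorFin n r hr x y ∈ S) :
    l.length ≤ n ^ s := by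
  rcases Nat.eq_zero_or_pos n with rfl | hn
  · cases l with
    | nil => simp
    | cons x _ => exact absurd x.isLt (by simp [hr.ne'])
  have : NeZero n := ⟨hn.ne'⟩
  have hcolor : ∀ x y : Fin (n ^ r), x < y →
      digitColor n r x y = digitColorFin n r hr x y + 1 := fun x y hxy => by
    have := digitColor_pos x.isLt y.isLt (Fin.val_ne_of_ne hxy.ne)
    have := digitColor_le x.isLt y.isLt (Fin.val_ne_of_ne hxy.ne)
    simp only [digitColorFin]
    omega
  calc l.length ≤ n ^ (S.image fun c : Fin r => (c : ℕ) + 1).card :=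
        length_le_of_isChain_digitColor _ <| hl.imp fun x y ⟨hxy, hS⟩ =>
          ⟨hxy, hcolor x y hxy ▸ Finset.mem_image_of_mem _ hS⟩
    _ ≤ n ^ s := Nat.pow_le_pow_right hn (Finset.card_image_le.trans hS)

end DigitColoring

open DigitColoring in
/-- For `n ≥ 2` and positive integers `s ≤ r`, in the digit-colored transitive
tournament on `{0, 1, …, n^r − 1}` (edges oriented from smaller to larger), every
directed path whose edges use at most `s` colors has at most `n^s` vertices.
In particular, for every perfect `r`-th power `m`, there is an `r`-coloring of the
transitive tournament on `m` vertices in which every directed path using at most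
`s` colors has at most `m^(s/r)` vertices. -/
theorem stmt_10 (n r s : ℕ) (hn : 2 ≤ n) (hs : 0 < s) (hsr : s ≤ r) :
    (∀ S : Finset ℕ, S.card ≤ s →
      ∀ l : List (Fin (n ^ r)),
        l.Chain' (fun x y => x < y ∧ digitColor n r (x : ℕ) (y : ℕ) ∈ S) →
        l.length ≤ n ^ s) ∧
    (∀ m : ℕ, (∃ k : ℕ, m = k ^ r) →
      ∃ c : Fin m → Fin m → Fin r,
        ∀ S : Finset (Fin r), S.card ≤ s →
          ∀ l : List (Fin m),
            l.Chain' (fun x y => x < y ∧ c x y ∈ S) →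
            (l.length : ℝ) ≤ (m : ℝ) ^ ((s : ℝ) / (r : ℝ))) := by
  have hr : 0 < r := hs.trans_le hsr
  refine ⟨fun S hS l hl => ?_, ?_⟩
  · have : NeZero n := ⟨by omega⟩
    -- the relation is elaborated on `ℕ`, so `hl` is about `l` coerced through the list monad
    rw [bind_pure_comp, List.map_eq_map, List.Chain', List.isChain_map] at hl
    exact (length_le_of_isChain_digitColor S hl).trans (Nat.pow_le_pow_right (by omega) hS)
  · rintro m ⟨k, rfl⟩
    refine ⟨fun x y => digitColorFin k r hr x y, fun S hS l hl => ?_⟩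
    rw [Nat.cast_pow, Real.pow_rpow_div_natCast k.cast_nonneg s hr.ne']
    exact_mod_cast length_le_of_isChain_digitColorFin hr hS hl
end

section
/- Let r, s, n be positive integers with s ≤ r. Every r-coloring of the edges of the transitive tournament on n vertices contains a directed path on at least n^{1/⌈r/s⌉} vertices whose edges use at most s colors. -/
/-!
Group the `r` colours into `k = ⌈r/s⌉` blocks of at most `s` consecutive colours, giving a
`k`-colouring. Label each vertex `v` by the vector whose `i`-th entry is the number of vertices of
a longest block-`i` path ending at `v`. For `u < v` the edge `uv` extends such a path ending at
`u` in the block of its colour, so `u` and `v` get different labels. All labels lie in `[1, L]ᵏ`,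
where `L` is the length of a longest path inside one block, so `n ≤ Lᵏ`.
-/

open Finset

section ChainHeight

variable {n : ℕ} (R : Fin n → Fin n → Prop) [DecidableRel R]

/-- The number of vertices of a longest chain `x₁ < ⋯ < xₘ = v` with `R` on each step. -/
def chainHeight (v : Fin n) : ℕ :=
  1 + ((Iio v).attach.filter fun u => R u.1 v).sup fun u => chainHeight u.1
termination_by v.val
decreasing_by exact Fin.lt_def.mp (mem_Iio.mp u.2)

lemma one_le_chainHeight (v : Fin n) : 1 ≤ chainHeight R v := by
  rw [chainHeight]; omega

lemma chainHeight_lt_chainHeight {u v : Fin n} (huv : u < v) (h : R u v) :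
    chainHeight R u < chainHeight R v := by
  have hmem : (⟨u, mem_Iio.mpr huv⟩ : Iio v) ∈ (Iio v).attach.filter fun u => R u.1 v := by
    simp [h]
  have : chainHeight R u ≤ _ := le_sup (f := fun u : Iio v => chainHeight R u.1) hmem
  rw [chainHeight.eq_1 R v]
  omega

lemma exists_chain_length_eq_chainHeight (v : Fin n) :
    ∃ l : List (Fin n), l.IsChain (fun x y => x < y ∧ R x y) ∧
      l.length = chainHeight R v ∧ l.getLast? = some v := by
  induction v using WellFoundedLT.induction with
  | ind v ih =>
  by_cases hne : ((Iio v).attach.filter fun u => R u.1 v).Nonempty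
  · obtain ⟨u, hu, hsup⟩ := exists_mem_eq_sup _ hne fun u : Iio v => chainHeight R u.1
    have huv : u.1 < v := mem_Iio.mp u.2
    obtain ⟨l, hl, hlen, hlast⟩ := ih u.1 huv
    refine ⟨l ++ [v], ?_, ?_, List.getLast?_concat⟩
    · refine List.isChain_append.mpr ⟨hl, List.isChain_singleton v, ?_⟩
      intro x hx y hy
      rw [hlast, Option.mem_some_iff] at hx
      simp only [List.head?_cons, Option.mem_some_iff] at hy
      subst hx hy
      exact ⟨huv, (mem_filter.mp hu).2⟩
    · rw [List.length_append, hlen, chainHeight.eq_1 R v, hsup, List.length_singleton, add_comm]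
  · refine ⟨[v], List.isChain_singleton v, ?_, rfl⟩
    rw [chainHeight, not_nonempty_iff_eq_empty.mp hne, sup_empty]
    rfl

end ChainHeight

section MonochromaticChain

variable {n : ℕ} {ι : Type*} [Fintype ι] [DecidableEq ι] (g : Fin n → Fin n → ι)

lemma card_le_pow_of_chainHeight_le {L : ℕ}
    (hL : ∀ i v, chainHeight (fun x y => g x y = i) v ≤ L) : n ≤ L ^ Fintype.card ι := by
  set profile : Fin n → ι → ℕ := fun v i => chainHeight (fun x y => g x y = i) v
  have hinj : Function.Injective profile := by
    intro u v huv
    by_contra hne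
    rcases lt_or_gt_of_ne hne with h | h
    · exact (chainHeight_lt_chainHeight _ h rfl).ne (congrFun huv (g u v))
    · exact (chainHeight_lt_chainHeight _ h rfl).ne (congrFun huv (g v u)).symm
  have hmaps : Set.MapsTo profile ↑(univ : Finset (Fin n))
      ↑(Fintype.piFinset fun _ : ι => Icc 1 L) := fun v _ =>
    Fintype.mem_piFinset.mpr fun i => mem_Icc.mpr ⟨one_le_chainHeight _ v, hL i v⟩
  calc n = (univ : Finset (Fin n)).card := by simp
    _ ≤ (Fintype.piFinset fun _ : ι => Icc 1 L).card := card_le_card_of_injOn _ hmaps hinj.injOn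
    _ = L ^ Fintype.card ι := by simp

theorem exists_monochromatic_chain_pow_length_ge [Nonempty ι] :
    ∃ i, ∃ l : List (Fin n), l.IsChain (fun x y => x < y ∧ g x y = i) ∧
      n ≤ l.length ^ Fintype.card ι := by
  rcases Nat.eq_zero_or_pos n with rfl | hn
  · exact ⟨Classical.arbitrary ι, [], List.isChain_nil, Nat.zero_le _⟩
  have : Nonempty (Fin n) := Fin.pos_iff_nonempty.mp hn
  obtain ⟨⟨i, v⟩, -, hmax⟩ := exists_max_image univ
    (fun p : ι × Fin n => chainHeight (fun x y => g x y = p.1) p.2) univ_nonempty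
  obtain ⟨l, hl, hlen, -⟩ := exists_chain_length_eq_chainHeight (fun x y => g x y = i) v
  exact ⟨i, l, hl, hlen ▸ card_le_pow_of_chainHeight_le g fun j u => hmax (j, u) (mem_univ _)⟩

end MonochromaticChain

lemma card_filter_div_eq_le {r s : ℕ} (hs : 0 < s) (i : ℕ) :
    (univ.filter fun j : Fin r => j.val / s = i).card ≤ s := by
  have hmaps : Set.MapsTo (Fin.val : Fin r → ℕ)
      ↑(univ.filter fun j : Fin r => j.val / s = i) ↑(Ico (i * s) (i * s + s)) := by
    intro j hj
    have := (Nat.div_eq_iff hs).mp (mem_filter.mp hj).2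
    simp only [coe_Ico, Set.mem_Ico]
    omega
  simpa using card_le_card_of_injOn _ hmaps Fin.val_injective.injOn

theorem stmt_11_general (r s n : ℕ) (hr : 0 < r) (hs : 0 < s)
    (c : Fin n → Fin n → Fin r) :
    ∃ S : Finset (Fin r), S.card ≤ s ∧
      ∃ l : List (Fin n),
        l.Chain' (fun x y => x < y ∧ c x y ∈ S) ∧
        (n : ℝ) ^ ((1 : ℝ) / ((⌈(r : ℝ) / (s : ℝ)⌉₊ : ℕ) : ℝ)) ≤ (l.length : ℝ) := by
  set k := ⌈(r : ℝ) / (s : ℝ)⌉₊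
  have hk : 0 < k := Nat.ceil_pos.mpr (by positivity)
  have hrk : r ≤ k * s := by
    have := (div_le_iff₀ (by positivity : (0 : ℝ) < s)).mp (Nat.le_ceil ((r : ℝ) / s))
    exact_mod_cast this
  let block : Fin r → Fin k := fun j =>
    ⟨j.val / s, (Nat.div_lt_iff_lt_mul hs).mpr (j.isLt.trans_le hrk)⟩
  have : Nonempty (Fin k) := Fin.pos_iff_nonempty.mp hk
  obtain ⟨i, l, hl, hlen⟩ := exists_monochromatic_chain_pow_length_ge fun x y => block (c x y)
  refine ⟨univ.filter fun j => j.val / s = i.val, card_filter_div_eq_le hs i,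
    l, hl.imp fun x y h => ⟨h.1, by simp [← h.2, block]⟩, ?_⟩
  rw [one_div, Real.rpow_inv_le_iff_of_pos (by positivity) (by positivity) (by positivity)]
  simpa using (Nat.cast_le (α := ℝ)).mpr hlen

/-- For positive integers `s ≤ r` and `n`, every `r`-coloring of the edges of the
transitive tournament on `n` vertices (each edge between `i < j` oriented from `i`
to `j`) contains a directed path on at least `n^(1/⌈r/s⌉)` vertices whose edges use
at most `s` colors. -/
theorem stmt_11 (r s n : ℕ) (hr : 0 < r) (hs : 0 < s) (hn : 0 < n) (hsr : s ≤ r)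
    (c : Fin n → Fin n → Fin r) :
    ∃ S : Finset (Fin r), S.card ≤ s ∧
      ∃ l : List (Fin n),
        l.Chain' (fun x y => x < y ∧ c x y ∈ S) ∧
        (n : ℝ) ^ ((1 : ℝ) / ((⌈(r : ℝ) / (s : ℝ)⌉₊ : ℕ) : ℝ)) ≤ (l.length : ℝ) :=
  stmt_11_general r s n hr hs c
end

section
/- Let r and n be positive integers. Every r-coloring of the edges of any n-vertex tournament (not necessarily transitive) contains a monochromatic directed path on at least n^{1/r} vertices. -/
/-!
For each colour `i`, fix a maximal acyclic subdigraph `Sᵢ` of the colour-`i` digraph and let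
`hᵢ v` be the number of edges of a longest `Sᵢ`-path starting at `v`, so `hᵢ v < L` where `L` is
the number of vertices of a longest monochromatic path. Acyclicity makes `hᵢ` strictly decrease
along `Sᵢ`-paths, and by maximality every colour-`i` edge `u → v` outside `Sᵢ` closes an
`Sᵢ`-path from `v` back to `u`; either way `hᵢ u ≠ hᵢ v`. As any two vertices span an edge of
some colour, `v ↦ (hᵢ v)ᵢ` is injective, whence `n ≤ L ^ r`.
-/

open Relation

section Acyclic

variable {α : Type*} {S : α → α → Prop}

lemma not_transGen_self_of_adjoin_edge (hS : ∀ x, ¬ TransGen S x x) {u v : α}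
    (hvu : ¬ ReflTransGen S v u) (x : α) :
    ¬ TransGen (fun a b => S a b ∨ a = u ∧ b = v) x x := by
  -- a path of the enlarged relation uses the new edge at most once, since `v` does not reach `u`
  have key : ∀ {a b : α}, TransGen (fun a b => S a b ∨ a = u ∧ b = v) a b →
      TransGen S a b ∨ (ReflTransGen S a u ∧ ReflTransGen S v b) := by
    intro a b h
    induction h with
    | single h =>
      rcases h with h | ⟨rfl, rfl⟩
      · exact .inl (.single h)
      · exact .inr ⟨.refl, .refl⟩
    | tail _ hstep ih =>
      rcases hstep with hstep | ⟨rfl, rfl⟩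
      · rcases ih with ih | ⟨hau, hvb⟩
        · exact .inl (ih.tail hstep)
        · exact .inr ⟨hau, hvb.tail hstep⟩
      · rcases ih with ih | ⟨-, hvb⟩
        · exact .inr ⟨ih.to_reflTransGen, .refl⟩
        · exact absurd hvb hvu
  intro hx
  rcases key hx with h | ⟨hxu, hvx⟩
  · exact hS x h
  · exact hvu (hvx.trans hxu)

lemma exists_acyclic_le_maximal [Finite α] (R : α → α → Prop) :
    ∃ S ≤ R, (∀ x, ¬ TransGen S x x) ∧ ∀ u v, R u v → S u v ∨ ReflTransGen S v u := by
  obtain ⟨S, ⟨hSR, hS⟩, hmax⟩ :=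
    (Set.toFinite {S : α → α → Prop | S ≤ R ∧ ∀ x, ¬ TransGen S x x}).exists_maximal
      ⟨⊥, bot_le, fun x h => (TransGen.head'_iff.mp h).elim fun _ h => h.1⟩
  refine ⟨S, hSR, hS, fun u v huv => or_iff_not_imp_right.2 fun hvu => ?_⟩
  have hle : (fun a b => S a b ∨ a = u ∧ b = v) ≤ S := by
    refine hmax ⟨?_, not_transGen_self_of_adjoin_edge hS hvu⟩ fun a b h => .inl h
    rintro a b (h | ⟨rfl, rfl⟩)
    exacts [hSR a b h, huv]
  exact hle u v (.inr ⟨rfl, rfl⟩)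

end Acyclic

section PathHeight

variable {α : Type*} [Fintype α] {S : α → α → Prop} {u v : α}

def pathLengths (S : α → α → Prop) (v : α) : Set ℕ :=
  {k | ∃ l : List α, (v :: l).Nodup ∧ (v :: l).IsChain S ∧ l.length = k}

noncomputable def pathHeight (S : α → α → Prop) (v : α) : ℕ :=
  sSup (pathLengths S v)

lemma bddAbove_pathLengths (S : α → α → Prop) (v : α) : BddAbove (pathLengths S v) := by
  refine ⟨Fintype.card α, ?_⟩
  rintro _ ⟨l, hnd, -, rfl⟩
  have := hnd.length_le_card
  simp only [List.length_cons] at this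
  omega

lemma exists_path_length_eq_pathHeight (S : α → α → Prop) (v : α) :
    ∃ l : List α, (v :: l).Nodup ∧ (v :: l).IsChain S ∧ l.length = pathHeight S v :=
  Nat.sSup_mem (s := pathLengths S v)
    ⟨0, [], List.nodup_singleton v, List.isChain_singleton v, rfl⟩ (bddAbove_pathLengths S v)

lemma length_le_pathHeight {l : List α} (hnd : (v :: l).Nodup) (hch : (v :: l).IsChain S) :
    l.length ≤ pathHeight S v :=
  le_csSup (bddAbove_pathLengths S v) ⟨l, hnd, hch, rfl⟩

lemma pathHeight_lt_of_rel (hS : ∀ x, ¬ TransGen S x x) (huv : S u v) :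
    pathHeight S v < pathHeight S u := by
  obtain ⟨l, hnd, hch, hl⟩ := exists_path_length_eq_pathHeight S v
  have hu : u ∉ v :: l := fun hu =>
    hS u <| .head' huv <|
      hch.induction (ReflTransGen S v ·) _ (fun _ _ h hv => hv.tail h) (fun _ => .refl) u hu
  have := length_le_pathHeight (hnd.cons hu) (hch.cons_cons huv)
  simp only [List.length_cons] at this
  omega

lemma pathHeight_lt_of_transGen (hS : ∀ x, ¬ TransGen S x x) (huv : TransGen S u v) :
    pathHeight S v < pathHeight S u := by
  induction huv with
  | single h => exact pathHeight_lt_of_rel hS h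
  | tail _ h ih => exact (pathHeight_lt_of_rel hS h).trans ih

end PathHeight

section Coloring

variable {α : Type*} [Fintype α]

/-- The Gallai–Roy theorem. -/
theorem exists_coloring_of_isChain_length_le (R : α → α → Prop) (L : ℕ)
    (hL : ∀ l : List α, l.Nodup → l.IsChain R → l.length ≤ L) :
    ∃ f : α → Fin L, ∀ u v, u ≠ v → R u v → f u ≠ f v := by
  obtain ⟨S, hSR, hS, hmax⟩ := exists_acyclic_le_maximal R
  have hlt : ∀ v, pathHeight S v < L := fun v => by
    obtain ⟨l, hnd, hch, hl⟩ := exists_path_length_eq_pathHeight S v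
    have := hL _ hnd (hch.imp hSR)
    simp only [List.length_cons] at this
    omega
  refine ⟨fun v => ⟨pathHeight S v, hlt v⟩, fun u v hne huv heq => ?_⟩
  replace heq : pathHeight S u = pathHeight S v := congrArg Fin.val heq
  rcases hmax u v huv with h | h
  · exact (pathHeight_lt_of_rel hS h).ne' heq
  · obtain rfl | h := reflTransGen_iff_eq_or_transGen.mp h
    · exact hne rfl
    · exact (pathHeight_lt_of_transGen hS h).ne heq

theorem card_le_pow_of_isChain_length_le {ι : Type*} [Fintype ι] (R : ι → α → α → Prop)
    (hR : ∀ u v, u ≠ v → ∃ i, R i u v ∨ R i v u) (L : ℕ)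
    (hL : ∀ i, ∀ l : List α, l.Nodup → l.IsChain (R i) → l.length ≤ L) :
    Fintype.card α ≤ L ^ Fintype.card ι := by
  classical
  choose f hf using fun i => exists_coloring_of_isChain_length_le (R i) L (hL i)
  have hinj : Function.Injective fun v i => f i v := by
    intro u v huv
    by_contra hne
    obtain ⟨i, hi | hi⟩ := hR u v hne
    · exact hf i u v hne hi (congrFun huv i)
    · exact hf i v u (Ne.symm hne) hi (congrFun huv i).symm
  simpa using Fintype.card_le_of_injective _ hinj

end Coloring

theorem stmt_12_general (r n : ℕ) (hr : 0 < r)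
    (o : Fin n → Fin n → Prop)
    (ho : ∀ u v : Fin n, u ≠ v → (o u v ↔ ¬ o v u))
    (c : Fin n → Fin n → Fin r) :
    ∃ q : Fin r, ∃ l : List (Fin n), l.Nodup ∧
      l.Chain' (fun x y => o x y ∧ c x y = q) ∧
      (n : ℝ) ^ ((1 : ℝ) / (r : ℝ)) ≤ (l.length : ℝ) := by
  set A := {k | ∃ q : Fin r, ∃ l : List (Fin n), l.Nodup ∧
    l.IsChain (fun x y => o x y ∧ c x y = q) ∧ l.length = k}
  have hA : BddAbove A := ⟨n, by rintro _ ⟨q, l, hnd, -, rfl⟩; simpa using hnd.length_le_card⟩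
  obtain ⟨q, l, hnd, hch, hl⟩ : sSup A ∈ A :=
    Nat.sSup_mem ⟨0, ⟨0, hr⟩, [], List.nodup_nil, List.isChain_nil, rfl⟩ hA
  have hcover : ∀ u v, u ≠ v → ∃ i, (o u v ∧ c u v = i) ∨ (o v u ∧ c v u = i) := by
    intro u v hne
    by_cases h : o u v
    · exact ⟨c u v, .inl ⟨h, rfl⟩⟩
    · exact ⟨c v u, .inr ⟨(ho u v hne).not_left.mp h, rfl⟩⟩
  have hcount : n ≤ l.length ^ r := by
    simpa using card_le_pow_of_isChain_length_le (fun i x y => o x y ∧ c x y = i) hcover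
      l.length fun i l' hnd' hch' => hl ▸ le_csSup hA ⟨i, l', hnd', hch', rfl⟩
  refine ⟨q, l, hnd, hch, ?_⟩
  rw [one_div, Real.rpow_inv_le_iff_of_pos (by positivity) (by positivity) (by positivity),
    Real.rpow_natCast]
  exact_mod_cast hcount

/-- Every `r`-coloring of the edges of any `n`-vertex tournament contains a
monochromatic directed path on at least `n^(1/r)` vertices, for positive integers
`r, n`. The tournament is given by a relation `o` such that for distinct vertices
exactly one orientation holds; a directed path is a duplicate-free list of vertices
with consecutive vertices joined by forward edges, and it is monochromatic if all
its edges get the same color. -/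
theorem stmt_12 (r n : ℕ) (hr : 0 < r) (hn : 0 < n)
    (o : Fin n → Fin n → Prop)
    (hirr : ∀ u, ¬ o u u)
    (ho : ∀ u v : Fin n, u ≠ v → (o u v ↔ ¬ o v u))
    (c : Fin n → Fin n → Fin r) :
    ∃ q : Fin r, ∃ l : List (Fin n), l.Nodup ∧
      l.Chain' (fun x y => o x y ∧ c x y = q) ∧
      (n : ℝ) ^ ((1 : ℝ) / (r : ℝ)) ≤ (l.length : ℝ) :=
  stmt_12_general r n hr o ho c
end

section
/- Let c be a 3-coloring of the edges of the transitive tournament on {1, ..., n} with colors red, blue, green, and let u < v < w be vertices with c(uv) = red, c(vw) = blue, and c(uw) = green (a rainbow triangle). Let c' be the coloring obtained from c by recoloring the edge uw red. Then for each of the three pairs of colors S ∈ {{red, blue}, {red, green}, {blue, green}}, the maximum number of vertices of a directed path all of whose edges have colors in S under c' is at most the corresponding maximum under c. -/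
/-- Destroying a rainbow triangle does not lengthen two-colored paths. Let `c` be a
3-coloring (colors `0 = red`, `1 = blue`, `2 = green`) of the edges of the transitive
tournament on `n` vertices, and let `u < v < w` be vertices with `c u v = red`,
`c v w = blue`, `c u w = green` (a rainbow triangle). Let `c'` be obtained from `c`
by recoloring the edge `uw` red. Then for each of the three 2-element sets `S` of
colors, every directed path whose edges have colors in `S` under `c'` is at most as
long as some directed path whose edges have colors in `S` under `c`. -/
theorem stmt_13 (n : ℕ) (c : Fin n → Fin n → Fin 3) (u v w : Fin n)
    (huv : u < v) (hvw : v < w)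
    (hred : c u v = 0) (hblue : c v w = 1) (hgreen : c u w = 2) :
    ∀ S : Finset (Fin 3), S.card = 2 →
      ∀ l' : List (Fin n),
        l'.Chain' (fun x y => x < y ∧ (if x = u ∧ y = w then (0 : Fin 3) else c x y) ∈ S) →
        ∃ l : List (Fin n),
          l.Chain' (fun x y => x < y ∧ c x y ∈ S) ∧ l'.length ≤ l.length := by
  intro S hS
  suffices h : ∀ l' : List (Fin n),
      l'.Chain' (fun x y => x < y ∧ (if x = u ∧ y = w then (0 : Fin 3) else c x y) ∈ S) →
      ∃ l : List (Fin n), l.Chain' (fun x y => x < y ∧ c x y ∈ S) ∧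
        l'.length ≤ l.length ∧ l.head? = l'.head? by
    intro l' hl'
    obtain ⟨l, h1, h2, _⟩ := h l' hl'
    exact ⟨l, h1, h2⟩
  intro l'
  induction l' with
  | nil => intro _; exact ⟨[], List.isChain_nil, le_refl _, rfl⟩
  | cons a t ih =>
    intro hch
    match t, hch, ih with
    | [], _, _ => exact ⟨[a], List.isChain_singleton a, le_refl _, rfl⟩
    | b :: t', hch, ih =>
      obtain ⟨hab, htail⟩ := List.isChain_cons_cons.mp hch
      obtain ⟨l, hl, hlen, hhead⟩ := ih htail
      cases l with
      | nil => simp at hhead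
      | cons b' rest =>
        have hb : b' = b := by simpa using hhead
        subst hb
        by_cases hc : c a b' ∈ S
        · refine ⟨a :: b' :: rest, List.isChain_cons_cons.mpr ⟨⟨hab.1, hc⟩, hl⟩, ?_, rfl⟩
          simpa using hlen
        · have hif : a = u ∧ b' = w := by
            by_contra hne
            rw [if_neg hne] at hab
            exact hc hab.2
          obtain ⟨ha, hb⟩ := hif
          subst ha; subst hb
          have h0 : (0 : Fin 3) ∈ S := by
            rw [if_pos ⟨rfl, rfl⟩] at hab; exact hab.2
          have h2 : (2 : Fin 3) ∉ S := by rwa [← hgreen]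
          have h1 : (1 : Fin 3) ∈ S := by
            have key : ∀ T : Finset (Fin 3), T.card = 2 → (0:Fin 3) ∈ T →
                (2:Fin 3) ∉ T → (1:Fin 3) ∈ T := by decide
            exact key S hS h0 h2
          refine ⟨a :: v :: b' :: rest,
            List.isChain_cons_cons.mpr ⟨⟨huv, by rw [hred]; exact h0⟩,
              List.isChain_cons_cons.mpr ⟨⟨hvw, by rw [hblue]; exact h1⟩, hl⟩⟩, ?_, rfl⟩
          · simp only [List.length_cons] at *
            omega
end

section
/- For every positive integer n, there exists a 3-coloring of the edges of the complete graph on n^2 vertices such that each of the three 2-colored subgraphs has chromatic number exactly n; that is, for each pair S of the three colors, the spanning subgraph G_S consisting of edges colored with a color in S satisfies χ(G_S) = n. -/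
open SimpleGraph

lemma chrom_helper {V : Type*} {n : ℕ} (G : SimpleGraph V) (C : G.Coloring (Fin n))
    (f : Fin n → V) (hinj : Function.Injective f)
    (hf : ∀ a b : Fin n, a ≠ b → G.Adj (f a) (f b)) :
    G.chromaticNumber = (n : ℕ∞) := by
  refine le_antisymm (by simpa using C.colorable.chromaticNumber_le) ?_
  have hclique : G.IsClique (Finset.univ.map ⟨f, hinj⟩ : Finset V) := by
    intro x hx y hy hxy
    simp only [Finset.coe_map, Set.mem_image, Finset.mem_coe, Finset.mem_univ,
      Function.Embedding.coeFn_mk] at hx hy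
    obtain ⟨a, -, rfl⟩ := hx
    obtain ⟨b, -, rfl⟩ := hy
    exact hf a b (fun h => hxy (by rw [h]))
  have := hclique.card_le_chromaticNumber
  simpa using this

/-- For every positive integer `n` there is a 3-coloring of the edges of the complete
graph on `n²` vertices such that each of the three 2-colored subgraphs has chromatic
number exactly `n`: for each 2-element set `S` of colors, the spanning subgraph `G_S`
of edges colored with a color in `S` satisfies `χ(G_S) = n`. -/
theorem stmt_14 (n : ℕ) (hn : 0 < n) :
    ∃ c : Fin (n ^ 2) → Fin (n ^ 2) → Fin 3,
      (∀ u v, c u v = c v u) ∧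
      ∀ S : Finset (Fin 3), S.card = 2 →
        (SimpleGraph.fromRel fun u v => c u v ∈ S).chromaticNumber = (n : ℕ∞) := by
  haveI : NeZero n := ⟨hn.ne'⟩
  have e : Fin (n ^ 2) ≃ Fin n × Fin n := (finCongr (sq n)).trans finProdFinEquiv.symm
  set r : Fin (n ^ 2) → Fin n := fun u => (e u).1 with hr
  set q : Fin (n ^ 2) → Fin n := fun u => (e u).2 with hq
  set c : Fin (n ^ 2) → Fin (n ^ 2) → Fin 3 :=
    fun u v => if r u = r v then 0 else if q u = q v then 1 else 2 with hc
  have csym : ∀ u v, c u v = c v u := by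
    intro u v
    by_cases h1 : r u = r v
    · by_cases h2 : q u = q v <;> simp [hc, h1, h2]
    · have h1' : ¬ r v = r u := fun h => h1 h.symm
      by_cases h2 : q u = q v
      · simp [hc, h1, h1', h2]
      · have h2' : ¬ q v = q u := fun h => h2 h.symm
        simp [hc, h1, h1', h2, h2']
  have key : ∀ u v : Fin (n ^ 2), u = v ↔ (r u = r v ∧ q u = q v) := by
    intro u v
    constructor
    · rintro rfl; exact ⟨rfl, rfl⟩
    · rintro ⟨h1, h2⟩
      exact e.injective (Prod.ext h1 h2)
  refine ⟨c, csym, ?_⟩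
  intro S hS
  have hS3 : S = ({0, 1} : Finset (Fin 3)) ∨ S = ({0, 2} : Finset (Fin 3)) ∨
      S = ({1, 2} : Finset (Fin 3)) := by
    revert hS; revert S; decide
  have adj_iff : ∀ u v, (SimpleGraph.fromRel fun u v => c u v ∈ S).Adj u v ↔
      (u ≠ v ∧ c u v ∈ S) := by
    intro u v
    rw [SimpleGraph.fromRel_adj]
    constructor
    · rintro ⟨h, h' | h'⟩
      · exact ⟨h, h'⟩
      · exact ⟨h, (csym u v) ▸ h'⟩
    · rintro ⟨h, h'⟩; exact ⟨h, Or.inl h'⟩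
  have hne_symm : ∀ a b : Fin n, (e.symm ((0 : Fin n), a) = e.symm ((0 : Fin n), b)) → a = b := by
    intro a b h
    have := congrArg e h
    simpa using this
  have hne_symm' : ∀ a b : Fin n, (e.symm (a, (0 : Fin n)) = e.symm (b, (0 : Fin n))) → a = b := by
    intro a b h
    have := congrArg e h
    simpa using this
  rcases hS3 with rfl | rfl | rfl
  · -- S = {0,1} : edges where same row or same column
    have hmem : ∀ u v, c u v ∈ ({0, 1} : Finset (Fin 3)) ↔ (r u = r v ∨ q u = q v) := by
      intro u v
      by_cases h1 : r u = r v <;> by_cases h2 : q u = q v <;> simp [hc, h1, h2] <;> decide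
    have C : (SimpleGraph.fromRel fun u v => c u v ∈ ({0,1} : Finset (Fin 3))).Coloring
        (Fin n) := by
      refine SimpleGraph.Coloring.mk (fun u => r u + q u) ?_
      intro u v hadj heq
      have heq' : r u + q u = r v + q v := heq
      rw [adj_iff, hmem] at hadj
      obtain ⟨hne, h | h⟩ := hadj
      · exact hne ((key u v).2 ⟨h, by rwa [h, add_right_inj] at heq'⟩)
      · exact hne ((key u v).2 ⟨by rwa [h, add_left_inj] at heq', h⟩)
    refine chrom_helper _ C (fun b => e.symm ((0 : Fin n), b)) (fun a b h => hne_symm a b h) ?_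
    intro a b hab
    rw [adj_iff, hmem]
    exact ⟨fun h => hab (hne_symm a b h), Or.inl (by simp [hr])⟩
  · -- S = {0,2} : edges iff not (different row, same column)
    have hmem : ∀ u v, c u v ∈ ({0, 2} : Finset (Fin 3)) ↔ (r u = r v ∨ q u ≠ q v) := by
      intro u v
      by_cases h1 : r u = r v <;> by_cases h2 : q u = q v <;> simp [hc, h1, h2] <;> decide
    have C : (SimpleGraph.fromRel fun u v => c u v ∈ ({0,2} : Finset (Fin 3))).Coloring
        (Fin n) := by
      refine SimpleGraph.Coloring.mk (fun u => q u) ?_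
      intro u v hadj heq
      have heq' : q u = q v := heq
      rw [adj_iff, hmem] at hadj
      obtain ⟨hne, h | h⟩ := hadj
      · exact hne ((key u v).2 ⟨h, heq'⟩)
      · exact h heq'
    refine chrom_helper _ C (fun b => e.symm ((0 : Fin n), b)) (fun a b h => hne_symm a b h) ?_
    intro a b hab
    rw [adj_iff, hmem]
    exact ⟨fun h => hab (hne_symm a b h), Or.inl (by simp [hr])⟩
  · -- S = {1,2} : edges iff different row
    have hmem : ∀ u v, c u v ∈ ({1, 2} : Finset (Fin 3)) ↔ r u ≠ r v := by
      intro u v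
      by_cases h1 : r u = r v <;> by_cases h2 : q u = q v <;> simp [hc, h1, h2] <;> decide
    have C : (SimpleGraph.fromRel fun u v => c u v ∈ ({1,2} : Finset (Fin 3))).Coloring
        (Fin n) := by
      refine SimpleGraph.Coloring.mk (fun u => r u) ?_
      intro u v hadj heq
      have heq' : r u = r v := heq
      rw [adj_iff, hmem] at hadj
      exact hadj.2 heq'
    refine chrom_helper _ C (fun a => e.symm (a, (0 : Fin n))) (fun a b h => hne_symm' a b h) ?_
    intro a b hab
    rw [adj_iff, hmem]
    refine ⟨fun h => hab (hne_symm' a b h), ?_⟩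
    simpa [hr] using hab
end
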